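/- arXiv:2504.20427 — 5 statements merged into one kernel-verified Lean document; each statement's English description precedes it below -/
import Mathlib

section
/- Let T be a tree that is maximally m-burnable. Then for every optimal burning sequence (x_1,…,x_m) of T, the associated neighbourhoods N_{m−1}[x_1], N_{m−2}[x_2], …, N_0[x_m] are pairwise disjoint. -/
open scoped Classical

noncomputable section

/-- A bundled finite simple graph. -/
structure BG where
  V : Type
  [fintypeV : Fintype V]
  G : SimpleGraph V

attribute [instance] BG.fintypeV

namespace Burn

variable {V : Type}

/-- The degree of a vertex. -/
def deg (G : SimpleGraph V) (v : V) : ℕ := Nat.card {u : V // G.Adj v u}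

/-- A branch vertex is a vertex of degree greater than 2. -/
def IsBranch (G : SimpleGraph V) (v : V) : Prop := 2 < deg G v

/-- A leaf is a vertex of degree 1. -/
def IsLeaf (G : SimpleGraph V) (v : V) : Prop := deg G v = 1

/-- `v` belongs to the closed neighbourhood `N_k[c]` of radius `k` about `c`. -/
def InNbhd (G : SimpleGraph V) (k : ℕ) (c v : V) : Prop :=
  G.Reachable v c ∧ G.dist v c ≤ k

/-- `x : Fin m → V` is a burning sequence of `G` (0-indexed version of `(x_1, …, x_m)`):
the closed neighbourhoods `N_{m-1-i}[x i]` cover `V` and `d(x i, x j) ≥ j - i` for `i < j`. -/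
def IsBurningSeq (G : SimpleGraph V) (m : ℕ) (x : Fin m → V) : Prop :=
  (∀ v : V, ∃ i : Fin m, InNbhd G (m - 1 - (i : ℕ)) (x i) v) ∧
  ∀ i j : Fin m, i < j → G.Reachable (x i) (x j) → (j : ℕ) - (i : ℕ) ≤ G.dist (x i) (x j)

/-- The burning number of a bundled graph: the least `m` admitting a burning sequence. -/
def burningNumber (A : BG) : ℕ :=
  sInf {m : ℕ | ∃ x : Fin m → A.V, IsBurningSeq A.G m x}

/-- The neighbourhoods associated to a burning sequence are pairwise disjoint. -/
def DisjointNbhds (G : SimpleGraph V) (m : ℕ) (x : Fin m → V) : Prop :=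
  ∀ i j : Fin m, i ≠ j → ∀ v : V,
    InNbhd G (m - 1 - (i : ℕ)) (x i) v → ¬ InNbhd G (m - 1 - (j : ℕ)) (x j) v

/-- All leaves are burned in the last round: every leaf `v` satisfies `d(v, x i) ≥ m - 1 - i`. -/
def LeavesLast (G : SimpleGraph V) (m : ℕ) (x : Fin m → V) : Prop :=
  ∀ v : V, IsLeaf G v → ∀ i : Fin m, m - 1 - (i : ℕ) ≤ G.dist v (x i)

/-- `B` is obtained from `A` by subdividing a single edge `u v`:
there is an injection `f` of the vertices of `A` into those of `B` missing exactly one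
vertex `w`, the edge `u v` is replaced by the path `u, w, v`, and all other adjacencies
are preserved. -/
def OneSubdiv (A B : BG) : Prop :=
  ∃ (f : A.V → B.V) (u v : A.V) (w : B.V),
    Function.Injective f ∧ A.G.Adj u v ∧
    (∀ b : B.V, b = w ∨ ∃ a : A.V, f a = b) ∧ w ∉ Set.range f ∧
    (∀ a b : A.V, B.G.Adj (f a) (f b) ↔ (A.G.Adj a b ∧ s(a, b) ≠ s(u, v))) ∧
    (∀ a : A.V, B.G.Adj (f a) w ↔ (a = u ∨ a = v))

/-- Two bundled graphs are homeomorphic when they are related by the equivalence relation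
generated by isomorphism together with single-edge subdivision (insertion/deletion of a
degree-two vertex along an arm or internal path). -/
def Homeomorphic (A B : BG) : Prop :=
  Relation.EqvGen (fun X Y => Nonempty (X.G ≃g Y.G) ∨ OneSubdiv X Y) A B

end Burn

open Burn


open SimpleGraph

namespace BurnProof

variable {V : Type} {G : SimpleGraph V}

lemma exists_geodesic_path {a b : V} (h : G.Reachable a b) :
    ∃ p : G.Walk a b, p.IsPath ∧ p.length = G.dist a b := by
  classical
  obtain ⟨p, hp⟩ := h.exists_walk_length_eq_dist
  refine ⟨p.bypass, p.bypass_isPath, le_antisymm ?_ ?_⟩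
  · exact le_trans p.length_bypass_le hp.le
  · exact SimpleGraph.dist_le _

lemma walk_split {u v a b : V} (p : G.Walk a b) (h : s(u,v) ∈ p.edges)
    (hnd : p.edges.Nodup) :
    (∃ (q : G.Walk a u) (r : G.Walk v b), q.length + 1 + r.length = p.length
       ∧ s(u,v) ∉ q.edges ∧ s(u,v) ∉ r.edges)
  ∨ (∃ (q : G.Walk a v) (r : G.Walk u b), q.length + 1 + r.length = p.length
       ∧ s(u,v) ∉ q.edges ∧ s(u,v) ∉ r.edges) := by
  induction p with
  | nil => simp at h
  | @cons a c b hac p ih =>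
    rw [Walk.edges_cons] at h hnd
    by_cases hhead : s(a,c) = s(u,v)
    · have hnotin : s(u,v) ∉ p.edges := hhead ▸ (List.nodup_cons.mp hnd).1
      rcases Sym2.eq_iff.mp hhead with ⟨hau, hcv⟩ | ⟨hav, hcu⟩
      · subst hau; subst hcv
        exact Or.inl ⟨Walk.nil, p, by simp only [Walk.length_nil, Walk.length_cons]; omega, by simp, hnotin⟩
      · subst hav; subst hcu
        exact Or.inr ⟨Walk.nil, p, by simp only [Walk.length_nil, Walk.length_cons]; omega, by simp, hnotin⟩
    · have hmem : s(u,v) ∈ p.edges := by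
        rcases List.mem_cons.mp h with h' | h'
        · exact absurd h'.symm hhead
        · exact h'
      rcases ih hmem (List.nodup_cons.mp hnd).2 with ⟨q, r, hlen, hq, hr⟩ | ⟨q, r, hlen, hq, hr⟩
      · refine Or.inl ⟨Walk.cons hac q, r, by simp [← hlen]; omega, ?_, hr⟩
        rw [Walk.edges_cons]
        intro hmm
        rcases List.mem_cons.mp hmm with h' | h'
        · exact hhead h'.symm
        · exact hq h'
      · refine Or.inr ⟨Walk.cons hac q, r, by simp [← hlen]; omega, ?_, hr⟩
        rw [Walk.edges_cons]
        intro hmm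
        rcases List.mem_cons.mp hmm with h' | h'
        · exact hhead h'.symm
        · exact hq h'

lemma dist_add_dist_le_of_mem_support {a b y : V} (p : G.Walk a b) (hy : y ∈ p.support) :
    G.dist a y + G.dist y b ≤ p.length := by
  classical
  have hspec := p.take_spec hy
  have hlen : (p.takeUntil y hy).length + (p.dropUntil y hy).length = p.length := by
    rw [← Walk.length_append, hspec]
  have h1 : G.dist a y ≤ (p.takeUntil y hy).length := SimpleGraph.dist_le _
  have h2 : G.dist y b ≤ (p.dropUntil y hy).length := SimpleGraph.dist_le _
  omega

lemma dist_getVert_left (hc : G.Connected) {a b : V} (p : G.Walk a b) :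
    ∀ t, t ≤ p.length → G.dist a (p.getVert t) ≤ t := by
  intro t
  induction t with
  | zero => intro _; simp [Walk.getVert_zero, SimpleGraph.dist_self]
  | succ t ih =>
    intro ht
    have h1 := ih (by omega)
    have hadj : G.Adj (p.getVert t) (p.getVert (t+1)) := p.adj_getVert_succ (by omega)
    have h2 : G.dist (p.getVert t) (p.getVert (t+1)) = 1 := dist_eq_one_iff_adj.mpr hadj
    have := hc.dist_triangle (u := a) (v := p.getVert t) (w := p.getVert (t+1))
    omega

lemma dist_getVert_right (hc : G.Connected) {a b : V} (p : G.Walk a b) :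
    ∀ t, t ≤ p.length → G.dist (p.getVert t) b ≤ p.length - t := by
  have key : ∀ n t, t ≤ p.length → p.length - t = n → G.dist (p.getVert t) b ≤ n := by
    intro n
    induction n with
    | zero =>
      intro t ht h0
      have : t = p.length := by omega
      subst this
      simp [Walk.getVert_length, SimpleGraph.dist_self]
    | succ n ih =>
      intro t ht hn
      have htlt : t < p.length := by omega
      have h1 := ih (t+1) (by omega) (by omega)
      have hadj : G.Adj (p.getVert t) (p.getVert (t+1)) := p.adj_getVert_succ htlt
      have h2 : G.dist (p.getVert t) (p.getVert (t+1)) = 1 := dist_eq_one_iff_adj.mpr hadj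
      have := hc.dist_triangle (u := p.getVert t) (v := p.getVert (t+1)) (w := b)
      omega
  intro t ht
  exact key _ t ht rfl

lemma unique_closer (hT : G.IsTree) {c a b y : V} (hca : G.Adj c a) (hcb : G.Adj c b)
    (hda : G.dist y a + 1 = G.dist y c) (hdb : G.dist y b + 1 = G.dist y c) : a = b := by
  classical
  have hconn := hT.isConnected
  obtain ⟨p₁, hp₁, hl₁⟩ := exists_geodesic_path (hconn.preconnected a y)
  obtain ⟨p₂, hp₂, hl₂⟩ := exists_geodesic_path (hconn.preconnected b y)
  have hc1 : c ∉ p₁.support := by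
    intro hmem
    have h := dist_add_dist_le_of_mem_support p₁ hmem
    have e1 : G.dist a y = G.dist y a := SimpleGraph.dist_comm
    have e2 : G.dist c y = G.dist y c := SimpleGraph.dist_comm
    have e3 : G.dist a c ≤ G.dist a y + G.dist y c := hconn.dist_triangle
    omega
  have hc2 : c ∉ p₂.support := by
    intro hmem
    have h := dist_add_dist_le_of_mem_support p₂ hmem
    have e1 : G.dist b y = G.dist y b := SimpleGraph.dist_comm
    have e2 : G.dist c y = G.dist y c := SimpleGraph.dist_comm
    omega
  have huniq := (SimpleGraph.isTree_iff_existsUnique_path.mp hT).2 c y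
  obtain ⟨P, _, hP⟩ := huniq
  have q1 : (Walk.cons hca p₁).IsPath := hp₁.cons hc1
  have q2 : (Walk.cons hcb p₂).IsPath := hp₂.cons hc2
  have e1 := hP _ q1
  have e2 := hP _ q2
  have : (Walk.cons hca p₁) = (Walk.cons hcb p₂) := by rw [e1, e2]
  have := congrArg (fun w => w.getVert 1) this
  simpa using this


def subAdj (G : SimpleGraph V) (u v : V) : Option V → Option V → Prop
  | some a, some b => G.Adj a b ∧ s(a,b) ≠ s(u,v)
  | some a, none => a = u ∨ a = v
  | none, some b => b = u ∨ b = v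
  | none, none => False

def subG (G : SimpleGraph V) (u v : V) : SimpleGraph (Option V) where
  Adj := subAdj G u v
  symm := by
    refine ⟨fun α β h => ?_⟩
    match α, β with
    | some a, some b =>
      exact ⟨h.1.symm, by rw [Sym2.eq_swap (a := b)]; exact h.2⟩
    | some a, none => exact h
    | none, some b => exact h
    | none, none => exact h
  loopless := by
    refine ⟨fun α h => ?_⟩
    match α with
    | some a => exact G.loopless.irrefl a h.1
    | none => exact h

@[simp] lemma subG_adj_some_some {G : SimpleGraph V} {u v a b : V} :
    (subG G u v).Adj (some a) (some b) ↔ G.Adj a b ∧ s(a,b) ≠ s(u,v) := Iff.rfl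
@[simp] lemma subG_adj_some_none {G : SimpleGraph V} {u v a : V} :
    (subG G u v).Adj (some a) none ↔ a = u ∨ a = v := Iff.rfl
@[simp] lemma subG_adj_none_some {G : SimpleGraph V} {u v b : V} :
    (subG G u v).Adj none (some b) ↔ b = u ∨ b = v := Iff.rfl
@[simp] lemma subG_adj_none_none {G : SimpleGraph V} {u v : V} :
    (subG G u v).Adj none none ↔ False := Iff.rfl

lemma subG_comm {G : SimpleGraph V} {u v : V} : subG G u v = subG G v u := by
  ext α β
  match α, β with
  | some a, some b =>
    simp only [subG_adj_some_some]
    rw [Sym2.eq_swap (a := u)]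
  | some a, none => simp only [subG_adj_some_none]; tauto
  | none, some b => simp only [subG_adj_none_some]; tauto
  | none, none => exact Iff.rfl

variable {G : SimpleGraph V} {u v : V}

lemma toSub {a b : V} (p : G.Walk a b) (hcl : s(u,v) ∉ p.edges) :
    ∃ q : (subG G u v).Walk (some a) (some b), q.length = p.length := by
  induction p with
  | nil => exact ⟨Walk.nil, rfl⟩
  | @cons a c b hac p ih =>
    rw [Walk.edges_cons] at hcl
    have h1 : s(a,c) ≠ s(u,v) := fun h => hcl (h ▸ List.mem_cons_self)
    have h2 : s(u,v) ∉ p.edges := fun h => hcl (List.mem_cons_of_mem _ h)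
    obtain ⟨q, hq⟩ := ih h2
    exact ⟨Walk.cons (subG_adj_some_some.mpr ⟨hac, h1⟩) q, by simp [hq]⟩

lemma subG_reachable_some {a b : V} (p : G.Walk a b) :
    (subG G u v).Reachable (some a) (some b) := by
  induction p with
  | nil => exact Reachable.refl _
  | @cons a c b hac p ih =>
    refine Reachable.trans ?_ ih
    by_cases he : s(a,c) = s(u,v)
    · rcases Sym2.eq_iff.mp he with ⟨hau, hcv⟩ | ⟨hav, hcu⟩
      · exact Reachable.trans (Adj.reachable (subG_adj_some_none.mpr (Or.inl hau)))
          (Adj.reachable (subG_adj_none_some.mpr (Or.inr hcv)))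
      · exact Reachable.trans (Adj.reachable (subG_adj_some_none.mpr (Or.inr hav)))
          (Adj.reachable (subG_adj_none_some.mpr (Or.inl hcu)))
    · exact Adj.reachable (subG_adj_some_some.mpr ⟨hac, he⟩)

lemma subG_connected (hc : G.Connected) : (subG G u v).Connected := by
  have haux : ∀ α : Option V, (subG G u v).Reachable α (some u) := by
    intro α
    match α with
    | none => exact Adj.reachable (by simp)
    | some a => exact (hc.preconnected a u).elim fun w => subG_reachable_some w
  constructor
  intro α β
  exact (haux α).trans (haux β).symm

lemma sub_dist_ge (hc : G.Connected) (huv : G.Adj u v) {a b : V} :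
    G.dist a b ≤ (subG G u v).dist (some a) (some b) := by
  have hproj : ∀ {α β : Option V} (q : (subG G u v).Walk α β),
      G.dist (α.getD u) (β.getD u) ≤ q.length := by
    intro α β q
    induction q with
    | nil => simp [SimpleGraph.dist_self]
    | @cons α γ β h q ih =>
      have h1 : G.dist (α.getD u) (γ.getD u) ≤ 1 := by
        match α, γ with
        | some a, some c => exact (dist_eq_one_iff_adj.mpr h.1).le
        | some a, none =>
          rcases h with h | h
          · subst h; simp [SimpleGraph.dist_self]
          · subst h; simp [(dist_eq_one_iff_adj.mpr huv.symm).le]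
        | none, some c =>
          rcases h with h | h
          · subst h; simp [SimpleGraph.dist_self]
          · subst h; simp [(dist_eq_one_iff_adj.mpr huv).le]
        | none, none => simp at h
      have htri := hc.dist_triangle (u := α.getD u) (v := γ.getD u) (w := β.getD u)
      have : (Walk.cons h q).length = q.length + 1 := Walk.length_cons _ _
      omega
  obtain ⟨q, hq⟩ := ((subG_connected hc).preconnected (some a) (some b)).exists_walk_length_eq_dist
  have := hproj q
  simpa [hq] using this

lemma sub_dist_le_succ (hc : G.Connected) {a b : V} :
    (subG G u v).dist (some a) (some b) ≤ G.dist a b + 1 := by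
  obtain ⟨p, hp, hl⟩ := exists_geodesic_path (hc.preconnected a b)
  by_cases hm : s(u,v) ∈ p.edges
  · rcases walk_split p hm hp.edges_nodup with ⟨q, r, hlen, hq, hr⟩ | ⟨q, r, hlen, hq, hr⟩
    · obtain ⟨q', hq'⟩ := toSub q hq
      obtain ⟨r', hr'⟩ := toSub r hr
      have hd := SimpleGraph.dist_le (((q'.concat (by simp : (subG G u v).Adj (some u) none)).concat
          (by simp : (subG G u v).Adj none (some v))).append r')
      rw [Walk.length_append, Walk.length_concat, Walk.length_concat] at hd
      omega
    · obtain ⟨q', hq'⟩ := toSub q hq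
      obtain ⟨r', hr'⟩ := toSub r hr
      have hd := SimpleGraph.dist_le (((q'.concat (by simp : (subG G u v).Adj (some v) none)).concat
          (by simp : (subG G u v).Adj none (some u))).append r')
      rw [Walk.length_append, Walk.length_concat, Walk.length_concat] at hd
      omega
  · obtain ⟨q, hq⟩ := toSub p hm
    have hd := SimpleGraph.dist_le q
    omega

lemma sub_dist_le_of_strict (hc : G.Connected) {a b : V}
    (h1 : G.dist a b < G.dist a u + 1 + G.dist v b)
    (h2 : G.dist a b < G.dist a v + 1 + G.dist u b) :
    (subG G u v).dist (some a) (some b) ≤ G.dist a b := by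
  obtain ⟨p, hp, hl⟩ := exists_geodesic_path (hc.preconnected a b)
  have hm : s(u,v) ∉ p.edges := by
    intro hm
    rcases walk_split p hm hp.edges_nodup with ⟨q, r, hlen, _, _⟩ | ⟨q, r, hlen, _, _⟩
    · have d1 : G.dist a u ≤ q.length := SimpleGraph.dist_le _
      have d2 : G.dist v b ≤ r.length := SimpleGraph.dist_le _
      omega
    · have d1 : G.dist a v ≤ q.length := SimpleGraph.dist_le _
      have d2 : G.dist u b ≤ r.length := SimpleGraph.dist_le _
      omega
  obtain ⟨q, hq⟩ := toSub p hm
  have hd := SimpleGraph.dist_le q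
  omega

lemma sub_dist_none_le (hc : G.Connected) (huv : G.Adj u v) {c : V}
    (hle : G.dist u c ≤ G.dist v c) :
    (subG G u v).dist none (some c) ≤ G.dist u c + 1 := by
  obtain ⟨p, hp, hl⟩ := exists_geodesic_path (hc.preconnected u c)
  have hm : s(u,v) ∉ p.edges := by
    intro hm
    rcases walk_split p hm hp.edges_nodup with ⟨q, r, hlen, _, _⟩ | ⟨q, r, hlen, _, _⟩
    · have d2 : G.dist v c ≤ r.length := SimpleGraph.dist_le _
      omega
    · have d1 : G.dist u v ≤ q.length := SimpleGraph.dist_le _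
      have d2 : G.dist u c ≤ r.length := SimpleGraph.dist_le _
      have : G.dist u v = 1 := dist_eq_one_iff_adj.mpr huv
      omega
  obtain ⟨q, hq⟩ := toSub p hm
  have hd := SimpleGraph.dist_le (Walk.cons (by simp : (subG G u v).Adj none (some u)) q)
  rw [Walk.length_cons] at hd
  omega

end BurnProof


section BGlevel

open Burn

namespace BurnProof


def subBG (T : BG) (u v : T.V) : BG :=
  { V := Option T.V, fintypeV := inferInstance, G := subG T.G u v }

lemma oneSubdiv_subBG (T : BG) {u v : T.V} (huv : T.G.Adj u v) :
    OneSubdiv T (subBG T u v) := by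
  refine ⟨some, u, v, none, fun a b h => Option.some.inj h, huv, ?_, ?_, ?_, ?_⟩
  · intro b
    match b with
    | none => exact Or.inl rfl
    | some a => exact Or.inr ⟨a, rfl⟩
  · rintro ⟨a, ha⟩
    cases ha
  · intro a b
    exact Iff.rfl
  · intro a
    exact Iff.rfl

lemma burn_le (T : BG) (hc : T.G.Connected) {u v : T.V} (huv : T.G.Adj u v)
    (m : ℕ) (x : Fin m → T.V) (hx : IsBurningSeq T.G m x)
    (hC1 : ∃ k : Fin m, T.G.dist u (x k) ≤ m - 1 - (k : ℕ) ∧ T.G.dist v (x k) ≤ m - 1 - (k : ℕ) ∧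
      (T.G.dist u (x k) + 1 ≤ m - 1 - (k : ℕ) ∨ T.G.dist v (x k) + 1 ≤ m - 1 - (k : ℕ)))
    (hC2 : ∀ z : T.V, ∃ k : Fin m, T.G.dist z (x k) + 1 ≤ m - 1 - (k : ℕ) ∨
      (T.G.dist z (x k) ≤ m - 1 - (k : ℕ) ∧
        T.G.dist z (x k) < T.G.dist z u + 1 + T.G.dist v (x k) ∧
        T.G.dist z (x k) < T.G.dist z v + 1 + T.G.dist u (x k))) :
    burningNumber (subBG T u v) ≤ m := by
  have hsc : (subG T.G u v).Connected := subG_connected hc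
  apply Nat.sInf_le
  refine ⟨fun k => some (x k), ?_, ?_⟩
  · intro α
    match α with
    | some z =>
      obtain ⟨k, hk⟩ := hC2 z
      refine ⟨k, hsc.preconnected _ _, ?_⟩
      show (subG T.G u v).dist (some z) (some (x k)) ≤ m - 1 - (k : ℕ)
      rcases hk with hk | ⟨hk1, hk2, hk3⟩
      · have := sub_dist_le_succ (u := u) (v := v) hc (a := z) (b := x k)
        omega
      · have := sub_dist_le_of_strict hc hk2 hk3
        omega
    | none =>
      obtain ⟨k, hku, hkv, hk1⟩ := hC1
      refine ⟨k, hsc.preconnected _ _, ?_⟩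
      show (subG T.G u v).dist none (some (x k)) ≤ m - 1 - (k : ℕ)
      rcases le_total (T.G.dist u (x k)) (T.G.dist v (x k)) with hle | hle
      · have := sub_dist_none_le hc huv (c := x k) hle
        omega
      · have h2 := sub_dist_none_le (u := v) (v := u) hc huv.symm (c := x k) hle
        rw [subG_comm (u := v) (v := u)] at h2
        omega
  · intro i j hij hreach
    show (j : ℕ) - (i : ℕ) ≤ (subG T.G u v).dist (some (x i)) (some (x j))
    have h1 := hx.2 i j hij (hc.preconnected _ _)
    have h2 := sub_dist_ge (u := u) (v := v) hc huv (a := x i) (b := x j)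
    omega


def ForbAt (G : SimpleGraph V) (m : ℕ) (x : Fin m → V) (a b z : V) : Prop :=
  ∀ k : Fin m, ¬(G.dist z (x k) + 1 ≤ m - 1 - (k : ℕ) ∨
      (G.dist z (x k) ≤ m - 1 - (k : ℕ) ∧
        G.dist z (x k) < G.dist z a + 1 + G.dist b (x k) ∧
        G.dist z (x k) < G.dist z b + 1 + G.dist a (x k)))

lemma orient {G : SimpleGraph V} (hc : G.Connected) {m : ℕ} {x : Fin m → V} {a b z : V}
    (hone : G.dist a b = 1) (hz : ForbAt G m x a b z) (k : Fin m)
    (hcov : G.dist z (x k) ≤ m - 1 - (k : ℕ)) :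
    G.dist z (x k) = G.dist z a + 1 + G.dist b (x k) ∨
    G.dist z (x k) = G.dist z b + 1 + G.dist a (x k) := by
  have h := hz k
  have hone' : G.dist b a = 1 := by rw [SimpleGraph.dist_comm]; exact hone
  have tri1 : G.dist z (x k) ≤ G.dist z a + 1 + G.dist b (x k) := by
    have t1 := hc.dist_triangle (u := z) (v := a) (w := x k)
    have t2 := hc.dist_triangle (u := a) (v := b) (w := x k)
    omega
  have tri2 : G.dist z (x k) ≤ G.dist z b + 1 + G.dist a (x k) := by
    have t1 := hc.dist_triangle (u := z) (v := b) (w := x k)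
    have t2 := hc.dist_triangle (u := b) (v := a) (w := x k)
    omega
  by_contra hcon
  push_neg at hcon
  exact h (Or.inr ⟨hcov, by omega, by omega⟩)

lemma core (T : BG) (hT : T.G.IsTree) (m : ℕ)
    (hmax2 : ∀ S : BG, OneSubdiv T S → ¬ burningNumber S ≤ m)
    (x : Fin m → T.V) (hx : IsBurningSeq T.G m x)
    {i j : Fin m} (hij : i < j) {z0 : T.V}
    (hzi : InNbhd T.G (m - 1 - (i : ℕ)) (x i) z0)
    (hzj : InNbhd T.G (m - 1 - (j : ℕ)) (x j) z0) : False := by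
  classical
  have hc : T.G.Connected := hT.isConnected
  have htri : ∀ a b c : T.V, T.G.dist a c ≤ T.G.dist a b + T.G.dist b c :=
    fun a b c => hc.dist_triangle
  have hcomm : ∀ a b : T.V, T.G.dist a b = T.G.dist b a := fun a b => SimpleGraph.dist_comm
  have hsep : ∀ k l : Fin m, k < l → (l : ℕ) - (k : ℕ) ≤ T.G.dist (x k) (x l) :=
    fun k l h => hx.2 k l h (hc.preconnected _ _)
  obtain ⟨W, hWp, hWl⟩ := exists_geodesic_path (hc.preconnected (x i) (x j))
  set D := W.length with hDdef
  have hijn : (i : ℕ) < (j : ℕ) := hij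
  have him : (i : ℕ) < m := i.isLt
  have hjm : (j : ℕ) < m := j.isLt
  have hD1 : 1 ≤ D := by
    have h1 := hsep i j hij
    omega
  have hDle : D ≤ (m - 1 - (i : ℕ)) + (m - 1 - (j : ℕ)) := by
    have h1 := htri (x i) z0 (x j)
    have h2 := hcomm z0 (x i)
    have h3 := hzi.2
    have h4 := hzj.2
    omega
  set U : ℕ → T.V := fun t => W.getVert t with hUdef
  have hUt : ∀ t, U t = W.getVert t := fun t => rfl
  have hU0 : U 0 = x i := W.getVert_zero
  have hUD : U D = x j := W.getVert_length
  have hdl : ∀ t, t ≤ D → T.G.dist (x i) (U t) = t ∧ T.G.dist (U t) (x j) = D - t := by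
    intro t ht
    have h1 := dist_getVert_left hc W t ht
    have h2 := dist_getVert_right hc W t ht
    rw [← hUt t] at h1 h2
    have h3 := htri (x i) (U t) (x j)
    omega
  have hadj : ∀ t, t < D → T.G.Adj (U t) (U (t+1)) := by
    intro t ht
    have := W.adj_getVert_succ ht
    rw [← hUt t, ← hUt (t+1)] at this
    exact this
  have hone : ∀ t, t < D → T.G.dist (U t) (U (t+1)) = 1 :=
    fun t ht => SimpleGraph.dist_eq_one_iff_adj.mpr (hadj t ht)
  have hone01 : T.G.dist (U 0) (U 1) = 1 := hone 0 hD1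
  have htwo : ∀ t, t + 2 ≤ D → U t ≠ U (t+2) := by
    intro t ht heq
    have h1 := (hdl t (by omega)).1
    have h2 := (hdl (t+2) ht).1
    rw [← heq] at h2
    omega
  -- every path edge has a forbidder
  have hforb : ∀ t, t < D → ∃ z : T.V, ForbAt T.G m x (U t) (U (t+1)) z := by
    intro t ht
    have hnb := hmax2 (subBG T (U t) (U (t+1))) (oneSubdiv_subBG T (hadj t ht))
    by_contra hno
    apply hnb
    apply burn_le T hc (hadj t ht) m x hx
    · by_cases hcase : t + 1 ≤ m - 1 - (i : ℕ)
      · refine ⟨i, ?_, ?_, Or.inl ?_⟩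
        · rw [hcomm, (hdl t (by omega)).1]; omega
        · rw [hcomm, (hdl (t+1) (by omega)).1]; omega
        · rw [hcomm, (hdl t (by omega)).1]; omega
      · refine ⟨j, ?_, ?_, Or.inr ?_⟩
        · rw [(hdl t (by omega)).2]; omega
        · rw [(hdl (t+1) (by omega)).2]; omega
        · rw [(hdl (t+1) (by omega)).2]; omega
    · simp only [ForbAt] at hno
      push_neg at hno
      exact hno
  -- claim 1 : at edge 0, the A-orientation is impossible
  have claim1 : ∀ (z : T.V) (k : Fin m), ForbAt T.G m x (U 0) (U 1) z →
      T.G.dist z (x k) ≤ m - 1 - (k : ℕ) →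
      T.G.dist z (x k) = T.G.dist z (U 0) + 1 + T.G.dist (U 1) (x k) → False := by
    intro z k hz hcov heq
    have hkm : (k : ℕ) < m := k.isLt
    have hzU0 : T.G.dist z (U 0) = T.G.dist z (x i) := by rw [hU0]
    have tri1 := htri z (U 0) (x k)
    have tri2 : T.G.dist (U 0) (x k) ≤ 1 + T.G.dist (U 1) (x k) := by
      have t2 := htri (U 0) (U 1) (x k)
      omega
    have eside : T.G.dist (U 0) (x k) = T.G.dist (U 1) (x k) + 1 := by omega
    have tri3 := htri z (U 1) (x k)
    have tri4 : T.G.dist z (U 1) ≤ T.G.dist z (U 0) + 1 := by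
      have t2 := htri z (U 0) (U 1)
      omega
    have zside : T.G.dist z (U 1) = T.G.dist z (U 0) + 1 := by omega
    have hdxi0 : T.G.dist (U 0) (x i) = 0 := by rw [hU0, SimpleGraph.dist_self]
    have hxi : m - 1 - (i : ℕ) + 1 ≤ T.G.dist z (x i) := by
      by_contra hcon
      have hcovi : T.G.dist z (x i) ≤ m - 1 - (i : ℕ) := by omega
      rcases orient hc hone01 hz i hcovi with he | he
      · omega
      · omega
    have hki : k ≠ i := by
      intro hk
      rw [hk] at heq
      omega
    have hU0k : T.G.dist (U 0) (x k) = T.G.dist (x i) (x k) := by rw [hU0]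
    rcases lt_or_gt_of_ne hki with hlt | hgt
    · have hkin : (k : ℕ) < (i : ℕ) := hlt
      have hsp := hsep k i hlt
      have hcm := hcomm (x k) (x i)
      omega
    · have hkin : (i : ℕ) < (k : ℕ) := hgt
      have hsp := hsep i k hgt
      omega
  -- claim 2 : at the last edge, the B-orientation is impossible
  have hD1' : D - 1 + 1 = D := by omega
  have hDD : D - 1 < D := by omega
  have claim2 : ∀ (z : T.V) (k : Fin m), ForbAt T.G m x (U (D-1)) (U D) z →
      T.G.dist z (x k) ≤ m - 1 - (k : ℕ) →
      T.G.dist z (x k) = T.G.dist z (U D) + 1 + T.G.dist (U (D-1)) (x k) → False := by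
    intro z k hz hcov heq
    have hkm : (k : ℕ) < m := k.isLt
    have honeD : T.G.dist (U (D-1)) (U D) = 1 := by
      have := hone (D-1) hDD
      rw [hD1'] at this
      exact this
    have honeD' : T.G.dist (U D) (U (D-1)) = 1 := by rw [hcomm]; exact honeD
    have hzUD : T.G.dist z (U D) = T.G.dist z (x j) := by rw [hUD]
    have hdxj0 : T.G.dist (U D) (x j) = 0 := by rw [hUD, SimpleGraph.dist_self]
    have hdxj1 : T.G.dist (U (D-1)) (x j) = 1 := by
      have := (hdl (D-1) (by omega)).2
      omega
    have tri1 := htri z (U D) (x k)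
    have tri2 : T.G.dist (U D) (x k) ≤ 1 + T.G.dist (U (D-1)) (x k) := by
      have t2 := htri (U D) (U (D-1)) (x k)
      omega
    have eside : T.G.dist (U D) (x k) = T.G.dist (U (D-1)) (x k) + 1 := by omega
    have tri3 := htri z (U (D-1)) (x k)
    have tri4 : T.G.dist z (U (D-1)) ≤ T.G.dist z (U D) + 1 := by
      have t2 := htri z (U D) (U (D-1))
      omega
    have zside : T.G.dist z (U (D-1)) = T.G.dist z (U D) + 1 := by omega
    have hxj : m - 1 - (j : ℕ) + 1 ≤ T.G.dist z (x j) := by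
      by_contra hcon
      have hcovj : T.G.dist z (x j) ≤ m - 1 - (j : ℕ) := by omega
      rcases orient hc honeD hz j hcovj with he | he
      · omega
      · omega
    have hkj : k ≠ j := by
      intro hk
      rw [hk] at heq
      omega
    have hUDk : T.G.dist (U D) (x k) = T.G.dist (x j) (x k) := by rw [hUD]
    rcases lt_or_gt_of_ne hkj with hlt | hgt
    · have hkin : (k : ℕ) < (j : ℕ) := hlt
      have hsp := hsep k j hlt
      have hcm := hcomm (x k) (x j)
      omega
    · have hkin : (j : ℕ) < (k : ℕ) := hgt
      have hsp := hsep j k hgt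
      omega
  -- B-forbidder propagation
  have claim3 : ∀ t, t + 1 < D →
      (∃ (z : T.V) (k : Fin m), ForbAt T.G m x (U t) (U (t+1)) z ∧
        T.G.dist z (x k) ≤ m - 1 - (k : ℕ) ∧
        T.G.dist z (x k) = T.G.dist z (U (t+1)) + 1 + T.G.dist (U t) (x k)) →
      ∀ (z' : T.V) (k' : Fin m), ForbAt T.G m x (U (t+1)) (U (t+2)) z' →
      T.G.dist z' (x k') ≤ m - 1 - (k' : ℕ) →
      T.G.dist z' (x k') = T.G.dist z' (U (t+1)) + 1 + T.G.dist (U (t+2)) (x k') → False := by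
    intro t ht hBt z' k' hz' hcov' heq'
    obtain ⟨z, k, hz, hcov, heq⟩ := hBt
    have hkm : (k : ℕ) < m := k.isLt
    have hk'm : (k' : ℕ) < m := k'.isLt
    have hone1 : T.G.dist (U t) (U (t+1)) = 1 := hone t (by omega)
    have hone2 : T.G.dist (U (t+1)) (U (t+2)) = 1 := hone (t+1) ht
    -- z side facts (B-side of edge t)
    have ztri1 := htri z (U t) (x k)
    have ztri2 : T.G.dist z (U t) ≤ T.G.dist z (U (t+1)) + 1 := by
      have t2 := htri z (U (t+1)) (U t)
      have t3 := hcomm (U (t+1)) (U t)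
      omega
    have zside : T.G.dist z (U t) = T.G.dist z (U (t+1)) + 1 := by omega
    have xktri1 := htri z (U (t+1)) (x k)
    have xktri2 : T.G.dist (U (t+1)) (x k) ≤ T.G.dist (U t) (x k) + 1 := by
      have t2 := htri (U (t+1)) (U t) (x k)
      have t3 := hcomm (U (t+1)) (U t)
      omega
    have xkside : T.G.dist (U (t+1)) (x k) = T.G.dist (U t) (x k) + 1 := by omega
    -- z' side facts (A-side of edge t+1)
    have z'tri1 := htri z' (U (t+1)) (x k')
    have z'tri2 : T.G.dist z' (U (t+2)) ≤ T.G.dist z' (U (t+1)) + 1 := by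
      have t2 := htri z' (U (t+1)) (U (t+2))
      omega
    have z'side : T.G.dist z' (U (t+2)) = T.G.dist z' (U (t+1)) + 1 := by
      have t2 := htri z' (U (t+2)) (x k')
      have t3 : T.G.dist (U (t+2)) (x k') ≤ 1 + T.G.dist (U (t+1)) (x k') := by
        have t4 := htri (U (t+2)) (U (t+1)) (x k')
        have t5 := hcomm (U (t+2)) (U (t+1))
        omega
      omega
    have xk'tri1 := htri z' (U (t+2)) (x k')
    have xk'tri2 : T.G.dist (U (t+1)) (x k') ≤ T.G.dist (U (t+2)) (x k') + 1 := by
      have t2 := htri (U (t+1)) (U (t+2)) (x k')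
      omega
    have xk'side : T.G.dist (U (t+1)) (x k') = T.G.dist (U (t+2)) (x k') + 1 := by
      have t2 := htri z' (U (t+1)) (x k')
      omega
    -- step 1 : z is not covered by x k'
    have step1 : m - 1 - (k' : ℕ) + 1 ≤ T.G.dist z (x k') := by
      by_contra hcon
      have hcovzk' : T.G.dist z (x k') ≤ m - 1 - (k' : ℕ) := by omega
      rcases orient hc hone1 hz k' hcovzk' with he | he
      · -- A-orientation for z at edge t: contradicts z being B-side
        have t2 := htri z (U (t+1)) (x k')
        omega
      · -- B-orientation: x k' would be A-side of edge t and B-side of edge t+1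
        have hxk'A : T.G.dist (U (t+1)) (x k') = T.G.dist (U t) (x k') + 1 := by
          have t2 := htri z (U (t+1)) (x k')
          have t3 : T.G.dist (U (t+1)) (x k') ≤ T.G.dist (U t) (x k') + 1 := by
            have t4 := htri (U (t+1)) (U t) (x k')
            have t5 := hcomm (U (t+1)) (U t)
            omega
          omega
        have heq2 : T.G.dist (U t) (x k') = T.G.dist (U (t+2)) (x k') := by omega
        have : U t = U (t+2) := by
          refine unique_closer (y := x k') hT ((hadj t (by omega)).symm) (hadj (t+1) ht) ?_ ?_
          · rw [hcomm (x k') (U t), hcomm (x k') (U (t+1))]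
            omega
          · rw [hcomm (x k') (U (t+2)), hcomm (x k') (U (t+1))]
            omega
        exact htwo t (by omega) this
    -- step 2 : z' is not covered by x k
    have step2 : m - 1 - (k : ℕ) + 1 ≤ T.G.dist z' (x k) := by
      by_contra hcon
      have hcovz'k : T.G.dist z' (x k) ≤ m - 1 - (k : ℕ) := by omega
      rcases orient hc hone2 hz' k hcovz'k with he | he
      · -- A-orientation for z' at edge t+1: x k would be B-side of edge t+1, A-side of edge t
        have hxkB : T.G.dist (U (t+1)) (x k) = T.G.dist (U (t+2)) (x k) + 1 := by
          have t2 := htri z' (U (t+1)) (x k)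
          have t3 : T.G.dist (U (t+1)) (x k) ≤ T.G.dist (U (t+2)) (x k) + 1 := by
            have t4 := htri (U (t+1)) (U (t+2)) (x k)
            omega
          omega
        have heq2 : T.G.dist (U t) (x k) = T.G.dist (U (t+2)) (x k) := by omega
        have : U t = U (t+2) := by
          refine unique_closer (y := x k) hT ((hadj t (by omega)).symm) (hadj (t+1) ht) ?_ ?_
          · rw [hcomm (x k) (U t), hcomm (x k) (U (t+1))]
            omega
          · rw [hcomm (x k) (U (t+2)), hcomm (x k) (U (t+1))]
            omega
        exact htwo t (by omega) this
      · -- B-orientation for z' at edge t+1: contradicts z' being A-side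
        have t2 := htri z' (U (t+1)) (x k)
        omega
    -- combine
    have c1 : T.G.dist z (x k') ≤ T.G.dist z (U (t+1)) + 1 + T.G.dist (U (t+2)) (x k') := by
      have t2 := htri z (U (t+1)) (x k')
      omega
    have c2 : T.G.dist z' (x k) ≤ T.G.dist z' (U (t+1)) + 1 + T.G.dist (U t) (x k) := by
      have t2 := htri z' (U (t+1)) (x k)
      omega
    omega
  -- the induction
  have hchain : ∀ s, s < D → ∃ (z : T.V) (k : Fin m),
      ForbAt T.G m x (U s) (U (s+1)) z ∧ T.G.dist z (x k) ≤ m - 1 - (k : ℕ) ∧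
      T.G.dist z (x k) = T.G.dist z (U (s+1)) + 1 + T.G.dist (U s) (x k) := by
    intro s
    induction s with
    | zero =>
      intro hs
      obtain ⟨z, hz⟩ := hforb 0 hs
      obtain ⟨k, hcov⟩ : ∃ k : Fin m, T.G.dist z (x k) ≤ m - 1 - (k : ℕ) := by
        obtain ⟨k, hk⟩ := hx.1 z
        exact ⟨k, hk.2⟩
      rcases orient hc (hone 0 hs) hz k hcov with he | he
      · exact absurd he (fun he => claim1 z k hz hcov he)
      · exact ⟨z, k, hz, hcov, he⟩
    | succ s ih =>
      intro hs
      have hBs := ih (by omega)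
      obtain ⟨z', hz'⟩ := hforb (s+1) hs
      obtain ⟨k', hcov'⟩ : ∃ k' : Fin m, T.G.dist z' (x k') ≤ m - 1 - (k' : ℕ) := by
        obtain ⟨k', hk'⟩ := hx.1 z'
        exact ⟨k', hk'.2⟩
      rcases orient hc (hone (s+1) hs) hz' k' hcov' with he | he
      · exact absurd he (fun he => claim3 s hs hBs z' k' hz' hcov' he)
      · exact ⟨z', k', hz', hcov', he⟩
  obtain ⟨z, k, hz, hcov, heq⟩ := hchain (D-1) hDD
  rw [hD1'] at hz heq
  exact claim2 z k hz hcov heq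


end BurnProof

end BGlevel

/-- `T` is maximally `m`-burnable: its burning number is `m` and no tree obtained from `T`
by subdividing a single edge is `m`-burnable. -/
def MaximallyBurnable (T : BG) (m : ℕ) : Prop :=
  burningNumber T = m ∧ ∀ S : BG, OneSubdiv T S → ¬ burningNumber S ≤ m

/-- If a tree `T` is maximally `m`-burnable, then for every optimal burning
sequence of `T` the associated neighbourhoods are pairwise disjoint. -/
theorem statement1 (T : BG) (hT : T.G.IsTree) (m : ℕ)
    (hmaxburn : MaximallyBurnable T m)
    (x : Fin m → T.V) (hx : IsBurningSeq T.G m x) :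
    DisjointNbhds T.G m x := by
  intro i j hne v hvi hvj
  rcases hne.lt_or_gt with h | h
  · exact BurnProof.core T hT m hmaxburn.2 x hx h hvi hvj
  · exact BurnProof.core T hT m hmaxburn.2 x hx h hvj hvi
end
end

section
/- Let T be a tree with burning number m. Suppose that for every optimal burning sequence of T the associated neighbourhoods are pairwise disjoint, and that for every optimal burning sequence (x_1,…,x_m) of T every leaf of T is burned in the last round (i.e., every leaf v satisfies d(v, x_i) ≥ m − i for all 1 ≤ i ≤ m). Then T is maximally m-burnable. -/
open scoped Classical

noncomputable section

open Burn

namespace BurnAux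
open SimpleGraph

variable {V : Type} {G : SimpleGraph V}

lemma dist_split {a b c : V} (W : G.Walk a b) (hc : c ∈ W.support) :
    G.dist a c + G.dist c b ≤ W.length := by
  have h := W.take_spec hc
  have := congrArg Walk.length h
  rw [Walk.length_append] at this
  calc G.dist a c + G.dist c b ≤ (W.takeUntil c hc).length + (W.dropUntil c hc).length :=
        Nat.add_le_add (SimpleGraph.dist_le _) (SimpleGraph.dist_le _)
    _ = W.length := this

lemma walk_ivt {z b : V} (r : ℕ) :
    ∀ {a : V} (W : G.Walk a b), G.dist z a ≤ r → r ≤ G.dist z b →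
    ∃ c ∈ W.support, G.dist z c = r := by
  intro a W
  induction W with
  | nil => intro ha hb; exact ⟨_, by simp, le_antisymm ha hb⟩
  | @cons x y b hadj W ih =>
    intro ha hb
    rcases eq_or_lt_of_le ha with h | h
    · exact ⟨x, by simp, h⟩
    · have hy : G.dist z y ≤ r := by
        have : G.dist z y ≤ G.dist z x + 1 := by
          have h1 : G.dist x y = 1 := SimpleGraph.dist_eq_one_iff_adj.mpr hadj
          calc G.dist z y ≤ G.dist z x + G.dist x y := by
                by_cases hr : G.Reachable z x
                · by_cases hr2 : G.Reachable x y
                  · obtain ⟨p, hp⟩ := hr.exists_walk_length_eq_dist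
                    obtain ⟨q, hq⟩ := hr2.exists_walk_length_eq_dist
                    calc G.dist z y ≤ (p.append q).length := SimpleGraph.dist_le _
                      _ = _ := by rw [Walk.length_append, hp, hq]
                  · exact absurd hadj.reachable hr2
                · have : ¬ G.Reachable z y := fun h2 => hr (h2.trans hadj.reachable.symm)
                  simp [SimpleGraph.dist_eq_zero_of_not_reachable this]
            _ = G.dist z x + 1 := by rw [h1]
        omega
      obtain ⟨c, hc, hc2⟩ := ih hy hb
      exact ⟨c, by simp [hc], hc2⟩

lemma exists_walk_map {V' : Type} {G' : SimpleGraph V'} (φ : V → V')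
    (hφ : ∀ {x y : V}, G.Adj x y → G'.Adj (φ x) (φ y) ∨ φ x = φ y)
    {a b : V} (W : G.Walk a b) : ∃ W' : G'.Walk (φ a) (φ b), W'.length ≤ W.length := by
  induction W with
  | nil => exact ⟨Walk.nil, by simp⟩
  | @cons x y b hadj W ih =>
    obtain ⟨W', hW'⟩ := ih
    rcases hφ hadj with h | h
    · exact ⟨Walk.cons h W', by simp; omega⟩
    · exact ⟨W'.copy h.symm rfl, by simp; omega⟩

lemma dist_map_le {V' : Type} {G' : SimpleGraph V'} (φ : V → V')
    (hφ : ∀ {x y : V}, G.Adj x y → G'.Adj (φ x) (φ y) ∨ φ x = φ y)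
    {a b : V} (h : G.Reachable a b) : G'.dist (φ a) (φ b) ≤ G.dist a b := by
  obtain ⟨W, hW⟩ := h.exists_walk_length_eq_dist
  obtain ⟨W', hW'⟩ := exists_walk_map φ hφ W
  calc G'.dist (φ a) (φ b) ≤ W'.length := SimpleGraph.dist_le _
    _ ≤ W.length := hW'
    _ = _ := hW

lemma reachable_map {V' : Type} {G' : SimpleGraph V'} (φ : V → V')
    (hφ : ∀ {x y : V}, G.Adj x y → G'.Adj (φ x) (φ y) ∨ φ x = φ y)
    {a b : V} (h : G.Reachable a b) : G'.Reachable (φ a) (φ b) := by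
  obtain ⟨W⟩ := h
  obtain ⟨W', _⟩ := exists_walk_map φ hφ W
  exact ⟨W'⟩

lemma potential_le_walk (ψ : V → ℤ) (hψ : ∀ {x y : V}, G.Adj x y → ψ x ≤ ψ y + 1)
    {a b : V} (W : G.Walk a b) : ψ a ≤ ψ b + W.length := by
  induction W with
  | nil => simp
  | @cons x y b hadj W ih =>
    have := hψ hadj
    simp only [Walk.length_cons]
    push_cast
    omega

lemma potential_le (ψ : V → ℤ) (hψ : ∀ {x y : V}, G.Adj x y → ψ x ≤ ψ y + 1)
    {a b : V} (h : G.Reachable a b) : ψ a ≤ ψ b + G.dist a b := by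
  obtain ⟨W, hW⟩ := h.exists_walk_length_eq_dist
  have := potential_le_walk ψ hψ W
  omega

lemma dist_lt_card [Fintype V] (h : G.Preconnected) (a b : V) :
    G.dist a b < Fintype.card V := by
  obtain ⟨p, hp, hl⟩ := (h a b).exists_path_of_dist
  rw [← hl]
  exact hp.length_lt


section Cover
variable (G)

/-- Greedy repair of a covering family into a burning sequence. -/
noncomputable def repair (c : ℕ → V) : ℕ → V
  | i =>
    if ∀ s : Fin i, i - s.val ≤ G.dist (c i) (repair c s.val) then c i
    else if h2 : ∃ v : V, ∀ s : Fin i, i - s.val ≤ G.dist v (repair c s.val) then h2.choose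
    else c i
  termination_by i => i
  decreasing_by all_goals omega

variable {G}

/-- `v` is unburned at stage `i`. -/
def Unb (c : ℕ → V) (i : ℕ) (v : V) : Prop :=
  ∀ s : Fin i, i - s.val ≤ G.dist v (repair G c s.val)

lemma repair_unb (c : ℕ → V) (i : ℕ) (h2 : ∃ v : V, Unb (G := G) c i v) :
    Unb (G := G) c i (repair G c i) := by
  rw [repair.eq_def]
  dsimp only
  split_ifs with h h'
  · exact h
  · exact h'.choose_spec
  · exact absurd h2 h'

lemma repair_eq_or (c : ℕ → V) (i : ℕ) :
    repair G c i = c i ∨ ¬ Unb (G := G) c i (c i) := by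
  rw [repair.eq_def]
  dsimp only
  split_ifs with h h'
  · exact Or.inl rfl
  · exact Or.inr h
  · exact Or.inl rfl

lemma not_unb {c : ℕ → V} {i : ℕ} {v : V} (h : ¬ Unb (G := G) c i v) :
    ∃ s, s < i ∧ G.dist v (repair G c s) + 1 ≤ i - s := by
  rw [Unb] at h; push_neg at h
  obtain ⟨s, hs⟩ := h
  exact ⟨s.val, s.isLt, by omega⟩

theorem cover_lemma (hconn : G.Connected) (k : ℕ) (c : ℕ → V)
    (hcov : ∀ v : V, ∃ i, i < k ∧ G.dist v (c i) + i + 1 ≤ k) :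
    (∃ t, t < k ∧ ∃ y : Fin t → V, IsBurningSeq G t y) ∨
    (∃ z : Fin k → V, IsBurningSeq G k z ∧
      ∀ i : Fin k, z i = c i ∨
        ∃ s : Fin k, (s : ℕ) < (i : ℕ) ∧ G.dist (c i) (z s) + 1 ≤ (i : ℕ) - (s : ℕ)) := by
  by_cases H : ∀ i, i < k → ∃ v : V, Unb (G := G) c i v
  · right
    refine ⟨fun i => repair G c i.val, ⟨?_, ?_⟩, ?_⟩
    · intro v
      obtain ⟨i, hik, hd⟩ := hcov v
      rcases repair_eq_or (G := G) c i with h | h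
      · refine ⟨⟨i, hik⟩, hconn v _, ?_⟩
        dsimp only
        rw [h]
        omega
      · obtain ⟨s, hsi, hds⟩ := not_unb h
        have htri : G.dist v (repair G c s) ≤ G.dist v (c i) + G.dist (c i) (repair G c s) :=
          hconn.dist_triangle
        refine ⟨⟨s, by omega⟩, hconn v _, ?_⟩
        dsimp only
        omega
    · intro i j hij _
      have := repair_unb (G := G) c j (H j j.2) ⟨i.val, by exact_mod_cast hij⟩
      rw [SimpleGraph.dist_comm] at this
      exact this
    · intro i
      rcases repair_eq_or (G := G) c i with h | h
      · exact Or.inl h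
      · obtain ⟨s, hsi, hds⟩ := not_unb h
        refine Or.inr ⟨⟨s, lt_trans hsi i.2⟩, hsi, ?_⟩
        dsimp only
        omega
  · left
    push_neg at H
    obtain ⟨i0, hi0k, hi0⟩ := H
    have hex : ∃ i, i < k ∧ ¬∃ v : V, Unb (G := G) c i v := ⟨i0, hi0k, not_exists.mpr hi0⟩
    obtain ⟨t, htk, htv, hmin⟩ : ∃ t, t < k ∧ (¬∃ v : V, Unb (G := G) c t v) ∧
        ∀ j, j < t → ∃ v : V, Unb (G := G) c j v := by
      refine ⟨Nat.find hex, (Nat.find_spec hex).1, (Nat.find_spec hex).2, fun j hj => ?_⟩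
      by_contra hc
      exact Nat.find_min hex hj ⟨lt_trans hj (Nat.find_spec hex).1, hc⟩
    refine ⟨t, htk, fun s => repair G c s.val, ?_, ?_⟩
    · intro v
      have hnu : ¬ Unb (G := G) c t v := fun hu => htv ⟨v, hu⟩
      obtain ⟨s, hst, hds⟩ := not_unb hnu
      refine ⟨⟨s, hst⟩, hconn v _, ?_⟩
      dsimp only
      omega
    · intro i j hij _
      have := repair_unb (G := G) c j (hmin j j.2) ⟨i.val, by exact_mod_cast hij⟩
      rw [SimpleGraph.dist_comm] at this
      exact this

theorem exists_burning [Fintype V] (hconn : G.Connected) :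
    ∃ t, ∃ y : Fin t → V, IsBurningSeq G t y := by
  obtain ⟨v0⟩ := hconn.nonempty
  have hcard : (0:ℕ) < Fintype.card V := @Fintype.card_pos _ _ ⟨v0⟩
  have := cover_lemma (G := G) hconn (Fintype.card V) (fun _ => v0) ?_
  · rcases this with ⟨t, _, y, hy⟩ | ⟨z, hz, _⟩
    · exact ⟨t, y, hy⟩
    · exact ⟨_, z, hz⟩
  · intro v
    have hd := dist_lt_card (G := G) hconn.preconnected v v0
    exact ⟨0, hcard, by omega⟩

end Cover
section Tree

/-- `G` with the edge `uv` deleted. -/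
abbrev Cut (G : SimpleGraph V) (u v : V) : SimpleGraph V := G \ SimpleGraph.fromEdgeSet {s(u,v)}

lemma cut_comm {u v : V} : Cut G u v = Cut G v u := by rw [Cut, Cut, Sym2.eq_swap]

lemma cut_adj {u v a b : V} (hab : G.Adj a b) (hne : s(a,b) ≠ s(u,v)) : (Cut G u v).Adj a b := by
  rw [sdiff_adj, fromEdgeSet_adj]
  exact ⟨hab, fun h => hne h.1⟩

lemma cut_walk_cases {u v : V} :
    ∀ {a b : V} (_W : G.Walk a b), (Cut G u v).Reachable a b ∨
      ((Cut G u v).Reachable a u ∧ (Cut G u v).Reachable v b) ∨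
      ((Cut G u v).Reachable a v ∧ (Cut G u v).Reachable u b) := by
  intro a b W
  induction W with
  | nil => exact Or.inl (Reachable.refl _)
  | @cons a c _ hadj W ih =>
    by_cases he : s(a,c) = s(u,v)
    · rcases Sym2.eq_iff.mp he with ⟨rfl, rfl⟩ | ⟨rfl, rfl⟩
      · rcases ih with h | ⟨h1, h2⟩ | ⟨h1, h2⟩
        · exact Or.inr (Or.inl ⟨Reachable.refl _, h⟩)
        · exact Or.inl (h1.symm.trans h2)
        · exact Or.inl h2
      · rcases ih with h | ⟨h1, h2⟩ | ⟨h1, h2⟩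
        · exact Or.inr (Or.inr ⟨Reachable.refl _, h⟩)
        · exact Or.inl h2
        · exact Or.inl (h1.symm.trans h2)
    · have hr : (Cut G u v).Reachable a c := (cut_adj hadj he).reachable
      rcases ih with h | ⟨h1, h2⟩ | ⟨h1, h2⟩
      · exact Or.inl (hr.trans h)
      · exact Or.inr (Or.inl ⟨hr.trans h1, h2⟩)
      · exact Or.inr (Or.inr ⟨hr.trans h1, h2⟩)

lemma cut_total (hconn : G.Connected) {u v : V} (huv : G.Adj u v) (a : V) :
    (Cut G u v).Reachable a u ∨ (Cut G u v).Reachable a v := by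
  obtain ⟨W⟩ := hconn a u
  rcases cut_walk_cases (u := u) (v := v) W with h | ⟨h1, h2⟩ | ⟨h1, h2⟩
  · exact Or.inl h
  · exact Or.inl h1
  · exact Or.inr h1

lemma cut_not_reach (hT : G.IsTree) {u v : V} (huv : G.Adj u v) :
    ¬ (Cut G u v).Reachable u v := by
  have hbr := isAcyclic_iff_forall_adj_isBridge.mp hT.2 huv
  exact isBridge_iff.mp hbr

lemma cut_excl (hT : G.IsTree) {u v a : V} (huv : G.Adj u v)
    (h1 : (Cut G u v).Reachable a u) (h2 : (Cut G u v).Reachable a v) : False :=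
  cut_not_reach hT huv (h1.symm.trans h2)

lemma cut_cross_edge (hT : G.IsTree) {u v a b : V} (huv : G.Adj u v) (hab : G.Adj a b)
    (ha : (Cut G u v).Reachable a u) (hb : (Cut G u v).Reachable b v) : a = u ∧ b = v := by
  by_cases he : s(a,b) = s(u,v)
  · rcases Sym2.eq_iff.mp he with ⟨rfl, rfl⟩ | ⟨rfl, rfl⟩
    · exact ⟨rfl, rfl⟩
    · exact absurd ha (fun h => cut_excl hT huv h (Reachable.refl _))
  · have hr : (Cut G u v).Reachable b u := ((cut_adj hab he).symm.reachable).trans ha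
    exact absurd hb (fun h => cut_excl hT huv hr h)

lemma cut_cross_support (hT : G.IsTree) {u v : V} (huv : G.Adj u v) :
    ∀ {a b : V} (W : G.Walk a b), (Cut G u v).Reachable a u → (Cut G u v).Reachable b v →
    u ∈ W.support := by
  intro a b W
  induction W with
  | nil => exact fun ha hb => absurd (cut_excl hT huv ha hb) (fun h => h)
  | @cons a c _ hadj W ih =>
    intro ha hb
    rcases cut_total hT.1 huv c with h | h
    · exact List.mem_cons_of_mem _ (ih h hb)
    · obtain ⟨rfl, rfl⟩ := cut_cross_edge hT huv hadj ha h
      exact List.mem_cons_self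

lemma cut_cross_support_v (hT : G.IsTree) {u v : V} (huv : G.Adj u v)
    {a b : V} (W : G.Walk a b) (ha : (Cut G u v).Reachable a u)
    (hb : (Cut G u v).Reachable b v) : v ∈ W.support := by
  have h1 : (Cut G v u).Reachable b v := by rw [← cut_comm]; exact hb
  have h2 : (Cut G v u).Reachable a u := by rw [← cut_comm]; exact ha
  have := cut_cross_support hT huv.symm W.reverse h1 h2
  rwa [Walk.support_reverse, List.mem_reverse] at this

lemma dist_cross_u (hT : G.IsTree) {u v b : V} (huv : G.Adj u v)
    (hb : (Cut G u v).Reachable b v) : G.dist b u = G.dist b v + 1 := by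
  have h1 : G.dist v u = 1 := SimpleGraph.dist_eq_one_iff_adj.mpr huv.symm
  have hle : G.dist b u ≤ G.dist b v + 1 := by
    have := hT.1.dist_triangle (u := b) (v := v) (w := u)
    omega
  obtain ⟨W, hW⟩ := (hT.1 b u).exists_walk_length_eq_dist
  have hv : v ∈ W.support := by
    have := cut_cross_support_v hT huv W.reverse (Reachable.refl _) hb
    rwa [Walk.support_reverse, List.mem_reverse] at this
  have := dist_split W hv
  omega

lemma dist_cross (hT : G.IsTree) {u v a b : V} (huv : G.Adj u v)
    (ha : (Cut G u v).Reachable a u) (hb : (Cut G u v).Reachable b v) :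
    G.dist a b = G.dist a u + 1 + G.dist v b := by
  have h1 : G.dist u v = 1 := SimpleGraph.dist_eq_one_iff_adj.mpr huv
  have hbu : G.dist b u = G.dist b v + 1 := dist_cross_u hT huv hb
  have hle : G.dist a b ≤ G.dist a u + 1 + G.dist v b := by
    have t1 := hT.1.dist_triangle (u := a) (v := u) (w := b)
    have t2 := hT.1.dist_triangle (u := u) (v := v) (w := b)
    have e1 : G.dist u b = G.dist b u := SimpleGraph.dist_comm
    have e2 : G.dist v b = G.dist b v := SimpleGraph.dist_comm
    omega
  obtain ⟨W, hW⟩ := (hT.1 a b).exists_walk_length_eq_dist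
  have hu : u ∈ W.support := cut_cross_support hT huv W ha hb
  have := dist_split W hu
  have e1 : G.dist u b = G.dist b u := SimpleGraph.dist_comm
  have e2 : G.dist v b = G.dist b v := SimpleGraph.dist_comm
  omega

lemma cut_stay (hT : G.IsTree) {u v : V} (huv : G.Adj u v) :
    ∀ {a b : V} (W : G.Walk a b), W.IsPath → (Cut G u v).Reachable a u →
      (Cut G u v).Reachable b u → ∀ c ∈ W.support, (Cut G u v).Reachable c u := by
  intro a b W
  induction W with
  | nil =>
    intro _ ha _ c hc
    rw [Walk.support_nil, List.mem_singleton] at hc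
    exact hc ▸ ha
  | @cons a d _ hadj W ih =>
    intro hp ha hb c hc
    rw [Walk.support_cons, List.mem_cons] at hc
    rcases hc with rfl | hc
    · exact ha
    · rcases cut_total hT.1 huv d with h | h
      · exact ih ((Walk.cons_isPath_iff _ _).mp hp).1 h hb c hc
      · obtain ⟨rfl, rfl⟩ := cut_cross_edge hT huv hadj ha h
        have : a ∈ W.support := by
          have := cut_cross_support hT huv W.reverse hb h
          rwa [Walk.support_reverse, List.mem_reverse] at this
        exact absurd this ((Walk.cons_isPath_iff _ _).mp hp).2

lemma exists_leaf_side [Fintype V] (hT : G.IsTree) {u v : V} (huv : G.Adj u v) :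
    ∃ l : V, Burn.IsLeaf G l ∧ (Cut G u v).Reachable l u := by
  classical
  obtain ⟨l, hlmem, hmax⟩ := Finset.exists_max_image
    (Finset.univ.filter (fun a => (Cut G u v).Reachable a u)) (fun a => G.dist a u)
    ⟨u, Finset.mem_filter.mpr ⟨Finset.mem_univ _, Reachable.refl _⟩⟩
  rw [Finset.mem_filter] at hlmem
  have hlu : (Cut G u v).Reachable l u := hlmem.2
  have hmax' : ∀ a, (Cut G u v).Reachable a u → G.dist a u ≤ G.dist l u := by
    intro a ha; exact hmax a (Finset.mem_filter.mpr ⟨Finset.mem_univ _, ha⟩)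
  refine ⟨l, ?_, hlu⟩
  rw [Burn.IsLeaf, Burn.deg, Nat.card_eq_one_iff_exists]
  by_cases hk : G.dist l u = 0
  · have hleq : l = u := (hT.1.dist_eq_zero_iff).mp hk
    subst hleq
    have hall : ∀ b : V, G.Adj l b → b = v := by
      intro b hb
      by_contra hbv
      have hne : s(l, b) ≠ s(l, v) := by
        intro h
        rcases Sym2.eq_iff.mp h with ⟨_, h2⟩ | ⟨h1, h2⟩
        · exact hbv h2
        · exact hb.ne' h2
      have hbu : (Cut G l v).Reachable b l := (cut_adj hb hne).symm.reachable
      have := hmax' b hbu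
      have hb0 : G.dist b l = 0 := by omega
      exact hb.ne' ((hT.1.dist_eq_zero_iff).mp hb0)
    exact ⟨⟨v, huv⟩, fun y => Subtype.ext (hall y.1 y.2)⟩
  · obtain ⟨P, hP, hPl⟩ := (hT.1 l u).exists_path_of_dist
    have hall : ∀ b : V, G.Adj l b → b = P.getVert 1 := by
      intro b hb
      have hbu : (Cut G u v).Reachable b u := by
        rcases cut_total hT.1 huv b with h | h
        · exact h
        · obtain ⟨hlu', _⟩ := cut_cross_edge hT huv hb hlu h
          rw [hlu'] at hk
          simp [SimpleGraph.dist_self] at hk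
      have hd : G.dist b u ≤ G.dist l u := hmax' b hbu
      obtain ⟨Q, hQ, hQl⟩ := (hT.1 b u).exists_path_of_dist
      have hlQ : l ∉ Q.support := by
        intro hmem
        have hsp := dist_split Q hmem
        have h1 : G.dist b l = 1 := SimpleGraph.dist_eq_one_iff_adj.mpr hb.symm
        omega
      have hW : (Walk.cons hb Q).IsPath := (Walk.cons_isPath_iff _ _).mpr ⟨hQ, hlQ⟩
      have hEq : Walk.cons hb Q = P := (hT.existsUnique_path l u).unique hW hP
      have hgv : (Walk.cons hb Q).getVert 1 = b := by
        rw [Walk.getVert_cons_succ, Walk.getVert_zero]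
      rw [hEq] at hgv
      exact hgv.symm
    have hl1 : 0 < P.length := by omega
    have hadj1 : G.Adj l (P.getVert 1) := by
      have := P.adj_getVert_succ hl1
      rwa [Walk.getVert_zero] at this
    exact ⟨⟨P.getVert 1, hadj1⟩, fun y => Subtype.ext (hall y.1 y.2)⟩

lemma finisher [Fintype V] (hT : G.IsTree) {u' v' rho zp : V} (hu'v' : G.Adj u' v') (r : ℕ)
    (hrside : (Cut G u' v').Reachable rho u')
    (hrho : G.dist rho zp + 1 ≤ r)
    (hslack : ∀ a : V, (Cut G u' v').Reachable a u' → G.dist a zp ≤ r → G.dist a zp + 1 ≤ r)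
    (hlf : ∀ l : V, Burn.IsLeaf G l → r ≤ G.dist l zp) : False := by
  by_cases hfar : ∃ a : V, (Cut G u' v').Reachable a u' ∧ r ≤ G.dist zp a
  · obtain ⟨a, haside, hfa⟩ := hfar
    obtain ⟨Wk, hWp, _⟩ := (hT.1 rho a).exists_path_of_dist
    have hstart : G.dist zp rho ≤ r := by
      have : G.dist rho zp = G.dist zp rho := SimpleGraph.dist_comm
      omega
    obtain ⟨cc, hcmem, hcd⟩ := walk_ivt r Wk hstart hfa
    have hcside := cut_stay hT hu'v' Wk hWp hrside haside cc hcmem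
    have hccomm : G.dist cc zp = G.dist zp cc := SimpleGraph.dist_comm
    have := hslack cc hcside (by omega)
    omega
  · push_neg at hfar
    obtain ⟨l, hl, hlside⟩ := exists_leaf_side hT hu'v'
    have h1 := hfar l hlside
    have h2 := hlf l hl
    have : G.dist l zp = G.dist zp l := SimpleGraph.dist_comm
    omega

end Tree
section Subdiv
variable {W : Type} {H : SimpleGraph W} {f : V → W} {u v : V} {w0 : W}

/-- Contraction map sending the subdivision vertex to `x`. -/
noncomputable def gleft (f : V → W) (x : V) : W → V :=
  fun s => if h : ∃ a, f a = s then h.choose else x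

lemma gleft_f (finj : Function.Injective f) (x a : V) : gleft f x (f a) = a := by
  have h : ∃ a', f a' = f a := ⟨a, rfl⟩
  rw [gleft, dif_pos h]
  exact finj h.choose_spec

lemma gleft_w (hw : w0 ∉ Set.range f) (x : V) : gleft f x w0 = x := by
  rw [gleft, dif_neg]
  rintro ⟨a, ha⟩
  exact hw ⟨a, ha⟩

variable (finj : Function.Injective f) (huv : G.Adj u v)
  (hw : w0 ∉ Set.range f)
  (hadjf : ∀ a b : V, H.Adj (f a) (f b) ↔ (G.Adj a b ∧ s(a, b) ≠ s(u, v)))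
  (hadjw : ∀ a : V, H.Adj (f a) w0 ↔ (a = u ∨ a = v))

include finj huv hw hadjf hadjw

lemma hom_gleft (hsurj : ∀ b : W, b = w0 ∨ ∃ a : V, f a = b) (x : V) (hx : x = u ∨ x = v) :
    ∀ {s t : W}, H.Adj s t →
      G.Adj (gleft f x s) (gleft f x t) ∨ gleft f x s = gleft f x t := by
  intro s t hst
  rcases hsurj s with rfl | ⟨a, rfl⟩
  · rcases hsurj t with rfl | ⟨b, rfl⟩
    · exact absurd rfl hst.ne
    · rw [gleft_w hw, gleft_f finj]
      rcases (hadjw b).mp hst.symm with rfl | rfl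
      · rcases hx with rfl | rfl
        · exact Or.inr rfl
        · exact Or.inl huv.symm
      · rcases hx with rfl | rfl
        · exact Or.inl huv
        · exact Or.inr rfl
  · rcases hsurj t with rfl | ⟨b, rfl⟩
    · rw [gleft_w hw, gleft_f finj]
      rcases (hadjw a).mp hst with rfl | rfl
      · rcases hx with rfl | rfl
        · exact Or.inr rfl
        · exact Or.inl huv
      · rcases hx with rfl | rfl
        · exact Or.inl huv.symm
        · exact Or.inr rfl
    · rw [gleft_f finj, gleft_f finj]
      exact Or.inl ((hadjf a b).mp hst).1

lemma reach_f (hconn : G.Connected) (a b : V) : H.Reachable (f a) (f b) := by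
  obtain ⟨P⟩ := hconn a b
  induction P with
  | nil => exact Reachable.refl _
  | @cons a c _ hadj P ih =>
    refine Reachable.trans ?_ ih
    by_cases he : s(a, c) = s(u, v)
    · have h1 : H.Adj (f a) w0 ∧ H.Adj (f c) w0 := by
        rcases Sym2.eq_iff.mp he with ⟨rfl, rfl⟩ | ⟨rfl, rfl⟩
        · exact ⟨(hadjw _).mpr (Or.inl rfl), (hadjw _).mpr (Or.inr rfl)⟩
        · exact ⟨(hadjw _).mpr (Or.inr rfl), (hadjw _).mpr (Or.inl rfl)⟩
      exact (h1.1.reachable).trans (h1.2.reachable.symm)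
    · exact ((hadjf a c).mpr ⟨hadj, he⟩).reachable

lemma H_connected (hconn : G.Connected) (hsurj : ∀ b : W, b = w0 ∨ ∃ a : V, f a = b) :
    H.Connected := by
  have hfu : H.Reachable (f u) w0 := ((hadjw u).mpr (Or.inl rfl)).reachable
  have key : ∀ s : W, H.Reachable s (f u) := by
    intro s
    rcases hsurj s with rfl | ⟨a, rfl⟩
    · exact hfu.symm
    · exact reach_f finj huv hw hadjf hadjw hconn a u
  haveI : Nonempty W := ⟨w0⟩
  exact ⟨fun s t => (key s).trans (key t).symm⟩

lemma subdiv_psi (hT : G.IsTree)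
    (hsurj : ∀ b : W, b = w0 ∨ ∃ a : V, f a = b) :
    (∀ a b : V, (Cut G u v).Reachable a u → (Cut G u v).Reachable b v →
      H.Reachable (f a) (f b) → G.dist a b + 1 ≤ H.dist (f a) (f b)) ∧
    (∀ a : V, (Cut G u v).Reachable a u → H.Reachable (f a) w0 →
      G.dist a u + 1 ≤ H.dist (f a) w0) := by
  classical
  set ψ : W → ℤ := fun s => if s = w0 then 0 else
    (if (Cut G u v).Reachable (gleft f u s) u then ((G.dist (gleft f u s) u : ℤ) + 1)
     else -((G.dist (gleft f u s) v : ℤ) + 1)) with hψdef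
  have hfnw : ∀ a : V, f a ≠ w0 := fun a h => hw ⟨a, h⟩
  have hval_u : ∀ a : V, (Cut G u v).Reachable a u → ψ (f a) = (G.dist a u : ℤ) + 1 := by
    intro a ha
    rw [hψdef]
    simp only [if_neg (hfnw a), gleft_f finj, if_pos ha]
  have hval_v : ∀ a : V, (Cut G u v).Reachable a v → ψ (f a) = -((G.dist a v : ℤ) + 1) := by
    intro a ha
    rw [hψdef]
    simp only [if_neg (hfnw a), gleft_f finj]
    rw [if_neg (fun h => cut_excl hT huv h ha)]
  have hval_w : ψ w0 = 0 := by rw [hψdef]; simp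
  have hlip : ∀ {s t : W}, H.Adj s t → ψ s ≤ ψ t + 1 := by
    intro s t hst
    rcases hsurj s with rfl | ⟨a, rfl⟩
    · rcases hsurj t with rfl | ⟨b, rfl⟩
      · exact absurd rfl hst.ne
      · rw [hval_w]
        rcases (hadjw b).mp hst.symm with rfl | rfl
        · rw [hval_u b (Reachable.refl _)]
          have : (0:ℤ) ≤ (G.dist b b : ℤ) := by positivity
          omega
        · rw [hval_v b (Reachable.refl _)]
          have : G.dist b b = 0 := SimpleGraph.dist_self
          omega
    · rcases hsurj t with rfl | ⟨b, rfl⟩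
      · rw [hval_w]
        rcases (hadjw a).mp hst with rfl | rfl
        · rw [hval_u a (Reachable.refl _)]
          have : G.dist a a = 0 := SimpleGraph.dist_self
          omega
        · rw [hval_v a (Reachable.refl _)]
          have : (0:ℤ) ≤ (G.dist a a : ℤ) := by positivity
          omega
      · obtain ⟨hab, hne⟩ := (hadjf a b).mp hst
        have hd : G.dist a b = 1 := SimpleGraph.dist_eq_one_iff_adj.mpr hab
        have htri1 : G.dist a u ≤ G.dist a b + G.dist b u := hT.1.dist_triangle
        have htri2 : G.dist b v ≤ G.dist b a + G.dist a v := hT.1.dist_triangle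
        have hd' : G.dist b a = 1 := SimpleGraph.dist_eq_one_iff_adj.mpr hab.symm
        rcases cut_total hT.1 huv a with hsa | hsa
        · rcases cut_total hT.1 huv b with hsb | hsb
          · rw [hval_u a hsa, hval_u b hsb]; omega
          · obtain ⟨rfl, rfl⟩ := cut_cross_edge hT huv hab hsa hsb
            exact absurd rfl hne
        · rcases cut_total hT.1 huv b with hsb | hsb
          · obtain ⟨rfl, rfl⟩ := cut_cross_edge hT huv hab.symm hsb hsa
            rw [Sym2.eq_swap] at hne
            exact absurd rfl hne
          · rw [hval_v a hsa, hval_v b hsb]; omega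
  constructor
  · intro a b ha hb hr
    have hpot := potential_le ψ (fun h => hlip h) hr
    rw [hval_u a ha, hval_v b hb] at hpot
    have hcross := dist_cross hT huv ha hb
    have hcomm : G.dist v b = G.dist b v := SimpleGraph.dist_comm
    omega
  · intro a ha hr
    have hpot := potential_le ψ (fun h => hlip h) hr
    rw [hval_u a ha, hval_w] at hpot
    omega

end Subdiv
/-- The contracted cover. -/
noncomputable def contrCover {W : Type} (k : ℕ) (g : W → V) (y : Fin k → W) (x0 : V) : ℕ → V :=
  fun n => if h : n < k then g (y ⟨n, h⟩) else x0

lemma contrCover_eq {W : Type} (k : ℕ) (g : W → V) (y : Fin k → W) (x0 : V) (i : Fin k) :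
    contrCover k g y x0 i.val = g (y i) := by
  rw [contrCover, dif_pos i.isLt]

end BurnAux

/-- Let `T` be a tree with burning number `m`. If for every optimal burning
sequence of `T` the associated neighbourhoods are pairwise disjoint, and in every optimal
burning sequence all leaves are burned in the last round, then `T` is maximally `m`-burnable. -/
theorem statement2 (T : BG) (hT : T.G.IsTree) (m : ℕ)
    (hb : burningNumber T = m)
    (hdisj : ∀ x : Fin m → T.V, IsBurningSeq T.G m x → DisjointNbhds T.G m x)
    (hleaf : ∀ x : Fin m → T.V, IsBurningSeq T.G m x → LeavesLast T.G m x) :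
    MaximallyBurnable T m := by
  classical
  refine ⟨hb, ?_⟩
  rintro S ⟨f, u, v, w0, finj, huv, hsurj, hw, hadjf, hadjw⟩ hle
  have hGconn : T.G.Connected := hT.1
  have hHconn : S.G.Connected := BurnAux.H_connected finj huv hw hadjf hadjw hGconn hsurj
  have hTset : ∀ t ∈ {n : ℕ | ∃ x : Fin n → T.V, IsBurningSeq T.G n x}, m ≤ t := by
    intro t ht
    have h1 := Nat.sInf_le ht
    have h2 : sInf {n : ℕ | ∃ x : Fin n → T.V, IsBurningSeq T.G n x} = m := hb
    omega
  obtain ⟨t0, y0, hy0⟩ := BurnAux.exists_burning (G := S.G) hHconn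
  have hSne : {n : ℕ | ∃ x : Fin n → S.V, IsBurningSeq S.G n x}.Nonempty := ⟨t0, y0, hy0⟩
  obtain ⟨k, hkmem, hkm⟩ : ∃ k, (∃ x : Fin k → S.V, IsBurningSeq S.G k x) ∧ k ≤ m :=
    ⟨sInf {n : ℕ | ∃ x : Fin n → S.V, IsBurningSeq S.G n x}, Nat.sInf_mem hSne, hle⟩
  obtain ⟨y, hy⟩ := hkmem
  have hhomu : ∀ {s t : S.V}, S.G.Adj s t →
      T.G.Adj (BurnAux.gleft f u s) (BurnAux.gleft f u t) ∨
        BurnAux.gleft f u s = BurnAux.gleft f u t :=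
    BurnAux.hom_gleft finj huv hw hadjf hadjw hsurj u (Or.inl rfl)
  have hhomv : ∀ {s t : S.V}, S.G.Adj s t →
      T.G.Adj (BurnAux.gleft f v s) (BurnAux.gleft f v t) ∨
        BurnAux.gleft f v s = BurnAux.gleft f v t :=
    BurnAux.hom_gleft finj huv hw hadjf hadjw hsurj v (Or.inr rfl)
  have hguf : ∀ a : T.V, BurnAux.gleft f u (f a) = a := BurnAux.gleft_f finj u
  have hgvf : ∀ a : T.V, BurnAux.gleft f v (f a) = a := BurnAux.gleft_f finj v
  have hguw : BurnAux.gleft f u w0 = u := BurnAux.gleft_w hw u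
  have hgvw : BurnAux.gleft f v w0 = v := BurnAux.gleft_w hw v
  have hgu_le : ∀ {s t : S.V}, S.G.Reachable s t →
      T.G.dist (BurnAux.gleft f u s) (BurnAux.gleft f u t) ≤ S.G.dist s t :=
    fun h => BurnAux.dist_map_le _ hhomu h
  have hgv_le : ∀ {s t : S.V}, S.G.Reachable s t →
      T.G.dist (BurnAux.gleft f v s) (BurnAux.gleft f v t) ≤ S.G.dist s t :=
    fun h => BurnAux.dist_map_le _ hhomv h
  have hc_eq : ∀ i : Fin k,
      BurnAux.contrCover k (BurnAux.gleft f u) y u i.val = BurnAux.gleft f u (y i) :=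
    BurnAux.contrCover_eq k _ y u
  have hcov : ∀ a : T.V, ∃ i, i < k ∧
      T.G.dist a (BurnAux.contrCover k (BurnAux.gleft f u) y u i) + i + 1 ≤ k := by
    intro a
    obtain ⟨i, hri, hdi⟩ := hy.1 (f a)
    refine ⟨i.val, i.isLt, ?_⟩
    have h1 : T.G.dist a (BurnAux.gleft f u (y i)) ≤ S.G.dist (f a) (y i) := by
      have h2 := hgu_le hri
      rwa [hguf] at h2
    rw [hc_eq i]
    have := i.isLt
    omega
  rcases BurnAux.cover_lemma hGconn k (BurnAux.contrCover k (BurnAux.gleft f u) y u) hcov with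
    ⟨t, htk, y', hy'⟩ | ⟨z, hz, hP⟩
  · have := hTset t ⟨y', hy'⟩
    omega
  · have hk : k = m := le_antisymm hkm (hTset k ⟨z, hz⟩)
    subst hk
    have hdz := hdisj z hz
    have hlz := hleaf z hz
    have hpart : ∀ (a : T.V) (i j : Fin k), T.G.dist a (z i) ≤ k - 1 - (i:ℕ) →
        T.G.dist a (z j) ≤ k - 1 - (j:ℕ) → i = j := by
      intro a i j h1 h2
      by_contra hne
      exact (hdz i j hne a ⟨hGconn a _, h1⟩) ⟨hGconn a _, h2⟩
    obtain ⟨hN1, hN2⟩ := BurnAux.subdiv_psi finj huv hw hadjf hadjw hT hsurj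
    -- Step 1 : both endpoints of the subdivided edge lie in one ball
    obtain ⟨i0, hri0, hdi0⟩ := hy.1 w0
    have hi0 := i0.isLt
    have hstep1 : ∃ p : Fin k, T.G.dist u (z p) ≤ k - 1 - (p:ℕ) ∧
        T.G.dist v (z p) ≤ k - 1 - (p:ℕ) := by
      rcases hsurj (y i0) with hyi0 | ⟨b, hfb⟩
      · -- y i0 = w0
        have hcu : BurnAux.contrCover k (BurnAux.gleft f u) y u i0.val = u := by
          rw [hc_eq i0, hyi0, hguw]
        rcases hP i0 with hz0 | ⟨s, hsi, hds⟩
        · -- z i0 = u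
          have hzu : z i0 = u := by rw [hz0, hcu]
          have hduz : T.G.dist u (z i0) = 0 := by rw [hzu]; exact SimpleGraph.dist_self
          -- show the radius at i0 is at least 1 using the coverage of f u
          obtain ⟨j, hrj, hdj⟩ := hy.1 (f u)
          have hj := j.isLt
          have hgdj : T.G.dist u (BurnAux.contrCover k (BurnAux.gleft f u) y u j.val)
              ≤ k - 1 - (j:ℕ) := by
            have h2 := hgu_le hrj
            rw [hguf] at h2
            rw [hc_eq j]
            omega
          have hr0pos : 1 ≤ k - 1 - (i0:ℕ) := by
            rcases hP j with hzj | ⟨s, hsj, hds⟩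
            · have hji0 : j = i0 := by
                refine hpart u j i0 ?_ (by omega)
                rw [hzj]; exact hgdj
              have hne : f u ≠ w0 := fun h => hw ⟨u, h⟩
              have hpos : 0 < S.G.dist (f u) (y i0) := by
                rw [hyi0]
                refine SimpleGraph.Reachable.pos_dist_of_ne ?_ hne
                rw [← hyi0]; rw [← hji0]; exact hrj
              rw [hji0] at hdj
              omega
            · have hs := s.isLt
              have htri : T.G.dist u (z s) ≤
                  T.G.dist u (BurnAux.contrCover k (BurnAux.gleft f u) y u j.val) +
                  T.G.dist (BurnAux.contrCover k (BurnAux.gleft f u) y u j.val) (z s) :=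
                hGconn.dist_triangle
              have hsi0 : s = i0 := by
                refine hpart u s i0 (by omega) (by omega)
              rw [hsi0] at htri hds
              omega
          refine ⟨i0, by omega, ?_⟩
          have h1 : T.G.dist v u = 1 := SimpleGraph.dist_eq_one_iff_adj.mpr huv.symm
          rw [hzu]
          omega
        · -- slack branch at i0
          have hs := s.isLt
          rw [hcu] at hds
          have h1 : T.G.dist v u = 1 := SimpleGraph.dist_eq_one_iff_adj.mpr huv.symm
          have htri : T.G.dist v (z s) ≤ T.G.dist v u + T.G.dist u (z s) :=
            hGconn.dist_triangle
          exact ⟨s, by omega, by omega⟩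
      · -- y i0 = f b
        rw [← hfb] at hdi0 hri0
        have hub : T.G.dist u (BurnAux.contrCover k (BurnAux.gleft f u) y u i0.val)
            ≤ k - 1 - (i0:ℕ) := by
          have h2 := hgu_le hri0
          rw [hguw, hguf] at h2
          rw [hc_eq i0, ← hfb, hguf]
          omega
        have hvb : T.G.dist v (BurnAux.contrCover k (BurnAux.gleft f u) y u i0.val)
            ≤ k - 1 - (i0:ℕ) := by
          have h2 := hgv_le hri0
          rw [hgvw, hgvf] at h2
          rw [hc_eq i0, ← hfb, hguf]
          omega
        rcases hP i0 with hz0 | ⟨s, hsi, hds⟩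
        · exact ⟨i0, by rw [hz0]; exact hub, by rw [hz0]; exact hvb⟩
        · have hs := s.isLt
          have htri1 : T.G.dist u (z s) ≤
              T.G.dist u (BurnAux.contrCover k (BurnAux.gleft f u) y u i0.val) +
              T.G.dist (BurnAux.contrCover k (BurnAux.gleft f u) y u i0.val) (z s) :=
            hGconn.dist_triangle
          have htri2 : T.G.dist v (z s) ≤
              T.G.dist v (BurnAux.contrCover k (BurnAux.gleft f u) y u i0.val) +
              T.G.dist (BurnAux.contrCover k (BurnAux.gleft f u) y u i0.val) (z s) :=
            hGconn.dist_triangle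
          exact ⟨s, by omega, by omega⟩
    obtain ⟨p, hup, hvp⟩ := hstep1
    have hp := p.isLt
    have hrp : 1 ≤ k - 1 - (p:ℕ) := by
      by_contra hr0
      have h0 : k - 1 - (p:ℕ) = 0 := by omega
      have h1 : u = z p := hGconn.dist_eq_zero_iff.mp (by omega)
      have h2 : v = z p := hGconn.dist_eq_zero_iff.mp (by omega)
      exact huv.ne (h1.trans h2.symm)
    -- the core dichotomy for vertices in the ball of z p
    have hcore : ∀ a : T.V, T.G.dist a (z p) ≤ k - 1 - (p:ℕ) →
        (T.G.dist a (z p) + 1 ≤ k - 1 - (p:ℕ)) ∨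
        (z p = BurnAux.contrCover k (BurnAux.gleft f u) y u p.val ∧
          S.G.Reachable (f a) (y p) ∧ S.G.dist (f a) (y p) ≤ k - 1 - (p:ℕ)) := by
      intro a hD
      obtain ⟨i, hri, hdi⟩ := hy.1 (f a)
      have hi := i.isLt
      have hGi : T.G.dist a (BurnAux.contrCover k (BurnAux.gleft f u) y u i.val)
          ≤ k - 1 - (i:ℕ) := by
        have h2 := hgu_le hri
        rw [hguf] at h2
        rw [hc_eq i]
        omega
      rcases hP i with hzi | ⟨s, hsi, hds⟩
      · have hip : i = p := hpart a i p (by rw [hzi]; exact hGi) hD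
        subst hip
        exact Or.inr ⟨hzi, hri, hdi⟩
      · have hs := s.isLt
        have htri : T.G.dist a (z s) ≤
            T.G.dist a (BurnAux.contrCover k (BurnAux.gleft f u) y u i.val) +
            T.G.dist (BurnAux.contrCover k (BurnAux.gleft f u) y u i.val) (z s) :=
          hGconn.dist_triangle
        have hsp : s = p := hpart a s p (by omega) hD
        rw [hsp] at htri hds
        exact Or.inl (by omega)
    have hlf : ∀ l : T.V, IsLeaf T.G l → k - 1 - (p:ℕ) ≤ T.G.dist l (z p) :=
      fun l hl => hlz l hl p
    -- final case analysis
    by_cases hzp : z p = BurnAux.contrCover k (BurnAux.gleft f u) y u p.val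
    · rcases hsurj (y p) with hyp | ⟨b, hfb⟩
      · -- y p = w0, so z p = u; penalise the u-side
        have hzpu : z p = u := by rw [hzp, hc_eq p, hyp, hguw]
        refine BurnAux.finisher hT huv (k - 1 - (p:ℕ)) (SimpleGraph.Reachable.refl u) ?_ ?_ hlf
        · have : T.G.dist u (z p) = 0 := by rw [hzpu]; exact SimpleGraph.dist_self
          omega
        · intro a ha hD
          rcases hcore a hD with h | ⟨_, hra, hda⟩
          · exact h
          · have hN := hN2 a ha (by rw [← hyp]; exact hra)
            rw [hyp] at hda
            rw [hzpu]
            omega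
      · -- y p = f b, so z p = b
        have hyfz : y p = f (z p) := by
          rw [hzp, hc_eq p, ← hfb, hguf, hfb]
        rcases BurnAux.cut_total hGconn huv (z p) with hSu | hSv
        · -- z p on the u-side; penalise the v-side
          have hslack : ∀ a : T.V, (BurnAux.Cut T.G u v).Reachable a v →
              T.G.dist a (z p) ≤ k - 1 - (p:ℕ) → T.G.dist a (z p) + 1 ≤ k - 1 - (p:ℕ) := by
            intro a ha hD
            rcases hcore a hD with h | ⟨_, hra, hda⟩
            · exact h
            · have hN := hN1 (z p) a hSu ha (by rw [← hyfz]; exact hra.symm)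
              rw [hyfz] at hda
              have e1 : S.G.dist (f (z p)) (f a) = S.G.dist (f a) (f (z p)) :=
                SimpleGraph.dist_comm
              have e2 : T.G.dist (z p) a = T.G.dist a (z p) := SimpleGraph.dist_comm
              omega
          refine BurnAux.finisher hT huv.symm (k - 1 - (p:ℕ))
            (SimpleGraph.Reachable.refl v) ?_ ?_ hlf
          · exact hslack v (SimpleGraph.Reachable.refl v) hvp
          · intro a ha hD
            have ha' : (BurnAux.Cut T.G u v).Reachable a v := by
              have hcc : BurnAux.Cut T.G u v = BurnAux.Cut T.G v u := BurnAux.cut_comm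
              rw [hcc]
              exact ha
            exact hslack a ha' hD
        · -- z p on the v-side; penalise the u-side
          have hslack : ∀ a : T.V, (BurnAux.Cut T.G u v).Reachable a u →
              T.G.dist a (z p) ≤ k - 1 - (p:ℕ) → T.G.dist a (z p) + 1 ≤ k - 1 - (p:ℕ) := by
            intro a ha hD
            rcases hcore a hD with h | ⟨_, hra, hda⟩
            · exact h
            · have hN := hN1 a (z p) ha hSv (by rw [← hyfz]; exact hra)
              rw [hyfz] at hda
              omega
          refine BurnAux.finisher hT huv (k - 1 - (p:ℕ))
            (SimpleGraph.Reachable.refl u) ?_ ?_ hlf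
          · exact hslack u (SimpleGraph.Reachable.refl u) hup
          · exact hslack
    · -- the repaired centre differs from the contracted one : slack everywhere
      have hslackB : ∀ a : T.V, T.G.dist a (z p) ≤ k - 1 - (p:ℕ) →
          T.G.dist a (z p) + 1 ≤ k - 1 - (p:ℕ) := by
        intro a hD
        rcases hcore a hD with h | ⟨h1, _, _⟩
        · exact h
        · exact absurd h1 hzp
      exact BurnAux.finisher hT huv (k - 1 - (p:ℕ)) (SimpleGraph.Reachable.refl u)
        (hslackB u hup) (fun a _ hD => hslackB a hD) hlf
end
end

section
/- Let T be a homeomorphically irreducible tree and let t be a T-admissible sequence. Then the order of any tree induced by t of degree m is uniquely determined by t and m; that is, any two trees induced by t of the same degree m have equal order. -/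
open scoped Classical

noncomputable section

namespace Burn

variable {V : Type}

/-- `b` lies on the (in a tree, unique) shortest path between `a` and `c`. -/
def Btw (G : SimpleGraph V) (a b c : V) : Prop :=
  G.dist a b + G.dist b c = G.dist a c

/-- A (possibly empty) rooted subtree of a tree `G`: a set of vertices that is closed under
taking vertices between the root and any of its members, together with a root belonging to it
whenever it is nonempty. -/
structure RSub (G : SimpleGraph V) where
  verts : Set V
  root : V
  root_mem : verts.Nonempty → root ∈ verts
  closed : ∀ u ∈ verts, ∀ w : V, Btw G root w u → w ∈ verts

/-- A `T`-admissible sequence: a finite sequence of rooted subtrees of `G` whose vertex sets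
partition the set of branch vertices of `G`. -/
def IsAdmissible (G : SimpleGraph V) {l : ℕ} (t : Fin l → RSub G) : Prop :=
  (∀ i : Fin l, ∀ v ∈ (t i).verts, IsBranch G v) ∧
  (∀ v : V, IsBranch G v → ∃! i : Fin l, v ∈ (t i).verts)

/-- The signature of an admissible sequence: `sig_t(v) = d(v, rt(T_i)) + i`
(with 1-based index `i`), for the unique `i` with `v ∈ V(T_i)`; junk value `0` elsewhere. -/
def sig (G : SimpleGraph V) {l : ℕ} (t : Fin l → RSub G) (v : V) : ℕ :=
  if h : ∃ i : Fin l, v ∈ (t i).verts then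
    G.dist v ((t h.choose).root) + (h.choose : ℕ) + 1
  else 0

/-- `u` and `v` belong to the same member of the sequence. -/
def SamePart {G : SimpleGraph V} {l : ℕ} (t : Fin l → RSub G) (u v : V) : Prop :=
  ∃ i : Fin l, u ∈ (t i).verts ∧ v ∈ (t i).verts

/-- The degree `m` is admissible for `t`: `m` exceeds every signature value. -/
def DegOK (G : SimpleGraph V) {l : ℕ} (t : Fin l → RSub G) (m : ℕ) : Prop :=
  ∀ v : V, IsBranch G v → sig G t v < m

/-- The number of vertices inserted in Stage 1 into the edge `u v` of the homeomorphically
irreducible tree `G` (in which every arm and every internal path is a single edge):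
an arm at a branch vertex `v` gets `m - sig(v) - 1` vertices; an internal edge joining branch
vertices in different members gets `2m - sig(u) - sig(v)` vertices; other edges get none. -/
def stage1 (G : SimpleGraph V) {l : ℕ} (t : Fin l → RSub G) (m : ℕ) (u v : V) : ℕ :=
  if IsBranch G u ∧ IsBranch G v then
    (if SamePart t u v then 0 else 2 * m - sig G t u - sig G t v)
  else if IsBranch G u then m - sig G t u - 1
  else if IsBranch G v then m - sig G t v - 1
  else 0

/-- The (0-based) index `i : Fin m` is free for the Stage 2 extensions: either `i ≥ l`
or `T_i` is empty. -/
def FreeIdx (G : SimpleGraph V) {l : ℕ} (t : Fin l → RSub G) (m : ℕ) (i : Fin m) : Prop :=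
  ∀ h : (i : ℕ) < l, (t ⟨(i : ℕ), h⟩).verts = ∅

/-- The edge `u v` of the homeomorphically irreducible tree `G` may receive Stage 2
extensions: it is an arm (exactly one endpoint is a branch vertex) or an internal path not of
length one (both endpoints are branch vertices lying in different members of the sequence). -/
def Stage2OK (G : SimpleGraph V) {l : ℕ} (t : Fin l → RSub G) (u v : V) : Prop :=
  G.Adj u v ∧
    ((IsBranch G u ∧ ¬ IsBranch G v) ∨ (¬ IsBranch G u ∧ IsBranch G v) ∨
      (IsBranch G u ∧ IsBranch G v ∧ ¬ SamePart t u v))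

/-- The vertex type of the graph obtained from `G` by inserting `c e` new vertices inside
each edge `e`. -/
def SubdivV (G : SimpleGraph V) (c : Sym2 V → ℕ) : Type :=
  V ⊕ (Σ e : G.edgeSet, Fin (c (e : Sym2 V)))

/-- Base adjacency relation of the subdivided graph: an edge `e` with `c e = 0` is kept;
an edge `e = {a, b}` with `c e = k > 0` is replaced by the path
`a, p₀, p₁, …, p_{k-1}, b` through the `k` new interior vertices. -/
def subdivRel (G : SimpleGraph V) (c : Sym2 V → ℕ) :
    SubdivV G c → SubdivV G c → Prop
  | Sum.inl a, Sum.inl b => G.Adj a b ∧ c s(a, b) = 0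
  | Sum.inl a, Sum.inr ⟨e, i⟩ =>
      (a = (Quot.out (e : Sym2 V)).1 ∧ (i : ℕ) = 0) ∨
      (a = (Quot.out (e : Sym2 V)).2 ∧ (i : ℕ) + 1 = c (e : Sym2 V))
  | Sum.inr ⟨e, i⟩, Sum.inr ⟨e', j⟩ => (e : Sym2 V) = (e' : Sym2 V) ∧ (j : ℕ) = (i : ℕ) + 1
  | _, _ => False

/-- The graph obtained from `G` by inserting `c e` new vertices inside each edge `e`. -/
def Subdiv (G : SimpleGraph V) (c : Sym2 V → ℕ) : SimpleGraph (SubdivV G c) :=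
  SimpleGraph.fromRel (subdivRel G c)

/-- `B` is a subdivision of `A` in which the original vertices of `A` are identified via
`ι`. -/
def IsSubdivisionVia (A B : BG) (ι : A.V → B.V) : Prop :=
  ∃ (c : Sym2 A.V → ℕ) (φ : Subdiv A.G c ≃g B.G), ∀ a : A.V, φ (Sum.inl a) = ι a

/-- `T''` is a tree induced by the `T`-admissible sequence `t` of degree `m`, with the branch
vertices of `T` identified inside `T''` via `ι`: there are extension counts `c` on the edges
of `T` decomposing as the Stage 1 counts plus Stage 2 contributions of `2(m-i)+1` vertices,
one for each free index `i`, each placed on an arm or on an internal path not of length one,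
such that `T''` is isomorphic, compatibly with `ι`, to the corresponding subdivision of `T`. -/
def IsInducedAt (T : BG) {l : ℕ} (t : Fin l → RSub T.G) (m : ℕ)
    (T'' : BG) (ι : T.V → T''.V) : Prop :=
  ∃ (c : Sym2 T.V → ℕ) (g : Fin m → T.V × T.V),
    (∀ i : Fin m, FreeIdx T.G t m i → Stage2OK T.G t (g i).1 (g i).2) ∧
    (∀ u v : T.V, T.G.Adj u v →
      c s(u, v) = stage1 T.G t m u v +
        ∑ i : Fin m,
          (if FreeIdx T.G t m i ∧ s((g i).1, (g i).2) = s(u, v) then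
            2 * (m - 1 - (i : ℕ)) + 1 else 0)) ∧
    ∃ φ : Subdiv T.G c ≃g T''.G, ∀ a : T.V, φ (Sum.inl a) = ι a

/-- `T''` is a tree induced by the `T`-admissible sequence `t` of degree `m`. -/
def IsInduced (T : BG) {l : ℕ} (t : Fin l → RSub T.G) (m : ℕ) (T'' : BG) : Prop :=
  ∃ ι : T.V → T''.V, IsInducedAt T t m T'' ι

end Burn

open Burn

namespace Burn

lemma sym2_out_mk {V : Type} (e : Sym2 V) :
    s((Quot.out e).1, (Quot.out e).2) = e := by
  exact Quot.out_eq e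

lemma card_induced (T : BG) {l : ℕ} (t : Fin l → RSub T.G) (m : ℕ)
    (A : BG) (hA : IsInduced T t m A) :
    Nat.card A.V = Nat.card T.V +
      ((∑ e : T.G.edgeSet,
          stage1 T.G t m (Quot.out (e : Sym2 T.V)).1 (Quot.out (e : Sym2 T.V)).2) +
        ∑ i : Fin m, (if FreeIdx T.G t m i then 2 * (m - 1 - (i : ℕ)) + 1 else 0)) := by
  obtain ⟨ι, c, g, hg, hc, φ, hφ⟩ := hA
  have hcard : Nat.card A.V = Nat.card (SubdivV T.G c) :=
    (Nat.card_congr φ.toEquiv).symm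
  have hsum : Nat.card (SubdivV T.G c) =
      Nat.card T.V + ∑ e : T.G.edgeSet, c (e : Sym2 T.V) := by
    show Nat.card (T.V ⊕ (Σ e : T.G.edgeSet, Fin (c (e : Sym2 T.V)))) = _
    rw [Nat.card_sum, Nat.card_eq_fintype_card (α := Σ e : T.G.edgeSet, Fin _),
      Fintype.card_sigma]
    simp [Fintype.card_fin]
  have hedge : ∀ e : T.G.edgeSet,
      c (e : Sym2 T.V) =
        stage1 T.G t m (Quot.out (e : Sym2 T.V)).1 (Quot.out (e : Sym2 T.V)).2 +
          ∑ i : Fin m,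
            (if FreeIdx T.G t m i ∧
                s((g i).1, (g i).2) = s((Quot.out (e : Sym2 T.V)).1, (Quot.out (e : Sym2 T.V)).2)
              then 2 * (m - 1 - (i : ℕ)) + 1 else 0) := by
    intro e
    have adj : T.G.Adj (Quot.out (e : Sym2 T.V)).1 (Quot.out (e : Sym2 T.V)).2 := by
      apply T.G.mem_edgeSet.mp
      rw [sym2_out_mk]
      exact e.2
    conv_lhs => rw [← sym2_out_mk (e : Sym2 T.V)]
    exact hc _ _ adj
  have hswap : ∀ i : Fin m,
      (∑ e : T.G.edgeSet,
        (if FreeIdx T.G t m i ∧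
            s((g i).1, (g i).2) = s((Quot.out (e : Sym2 T.V)).1, (Quot.out (e : Sym2 T.V)).2)
          then 2 * (m - 1 - (i : ℕ)) + 1 else 0)) =
      (if FreeIdx T.G t m i then 2 * (m - 1 - (i : ℕ)) + 1 else 0) := by
    intro i
    by_cases hf : FreeIdx T.G t m i
    · have adj : T.G.Adj (g i).1 (g i).2 := (hg i hf).1
      set e0 : T.G.edgeSet := ⟨s((g i).1, (g i).2), T.G.mem_edgeSet.mpr adj⟩ with he0
      rw [if_pos hf]
      rw [Finset.sum_eq_single_of_mem e0 (Finset.mem_univ _)]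
      · rw [if_pos ⟨hf, by simp [he0, sym2_out_mk]⟩]
      · intro e _ hne
        rw [if_neg]
        rintro ⟨-, h⟩
        apply hne
        apply Subtype.ext
        rw [he0]
        simp only
        rw [h, sym2_out_mk]
    · simp [hf]
  calc Nat.card A.V = Nat.card T.V + ∑ e : T.G.edgeSet, c (e : Sym2 T.V) := by
        rw [hcard, hsum]
    _ = _ := by
        congr 1
        rw [Finset.sum_congr rfl (fun e _ => hedge e), Finset.sum_add_distrib]
        congr 1
        rw [Finset.sum_comm]
        exact Finset.sum_congr rfl (fun i _ => hswap i)

end Burn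

/-- The order of a tree induced by a `T`-admissible sequence `t` of degree
`m` is uniquely determined by `t` and `m`: any two trees induced by `t` of degree `m` have the
same order. -/
theorem statement5 (T : BG) (hTree : T.G.IsTree)
    (hIrr : ∀ v : T.V, deg T.G v ≠ 2)
    {l : ℕ} (t : Fin l → RSub T.G) (ht : IsAdmissible T.G t)
    (m : ℕ) (hm : DegOK T.G t m)
    (A B : BG) (hA : IsInduced T t m A) (hB : IsInduced T t m B) :
    Nat.card A.V = Nat.card B.V := by
  rw [card_induced T t m A hA, card_induced T t m B hB]
end
end

section
/- Let T be a homeomorphically irreducible tree and suppose s and t are T-admissible sequences such that s is a reduction of t. Then sig_s = sig_t, and for every integer m admissible for both, the order of any tree induced by s of degree m equals the order of any tree induced by t of degree m. -/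
open scoped Classical

noncomputable section

namespace Burn

variable {V : Type}

/-- The set of vertices of the rooted subtree `S` consisting of `v` and all its descendants:
the members `u` of `S` such that `v` lies on the path from the root of `S` to `u`. -/
def Descend (G : SimpleGraph V) (S : RSub G) (v : V) : Set V :=
  {u ∈ S.verts | Btw G S.root v u}

/-- `s` is a reduction of `t` (Definition of reduction): for some `i < j`, some `w ∈ V(T_i)`
adjacent in `G` to some `v ∈ V(T_j)`, the sequence `s` agrees with `t` away from `i, j`,
`S_i` is `T_i` together with the subtree of `T_j` rooted at `v`, `S_j` is the rest of `T_j`,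
roots are preserved (the root of `S_j` equals that of `T_j` when `v` is not the root of
`T_j`), and `sig_s(v) = sig_t(v)`. -/
def IsReduction (G : SimpleGraph V) {l : ℕ} (s t : Fin l → RSub G) : Prop :=
  ∃ i j : Fin l, i < j ∧
    ∃ w ∈ (t i).verts, ∃ v ∈ (t j).verts, G.Adj w v ∧
      (∀ k : Fin l, k ≠ i → k ≠ j → s k = t k) ∧
      (s i).root = (t i).root ∧
      (v ≠ (t j).root → (s j).root = (t j).root) ∧
      (s i).verts = (t i).verts ∪ Descend G (t j) v ∧
      (s j).verts = (t j).verts \ Descend G (t j) v ∧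
      sig G s v = sig G t v

/-- `t` is canonical: for all `i < j`, no `w ∈ V(T_i)` is adjacent in `G` to a
`v ∈ V(T_j)` with `sig_t(v) = sig_t(w) + 1`. -/
def Canonical (G : SimpleGraph V) {l : ℕ} (t : Fin l → RSub G) : Prop :=
  ∀ i j : Fin l, i < j →
    ∀ w ∈ (t i).verts, ∀ v ∈ (t j).verts, G.Adj w v → sig G t v ≠ sig G t w + 1

end Burn

open Burn


namespace Burn

section Toolkit
open SimpleGraph
variable {V : Type} {G : SimpleGraph V}

lemma btw_of_mem_support (hconn : G.Connected) {a b c : V} (p : G.Walk a c)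
    (hp : p.length = G.dist a c) (hb : b ∈ p.support) : Btw G a b c := by
  have h1 : G.dist a b ≤ (p.takeUntil b hb).length := SimpleGraph.dist_le _
  have h2 : G.dist b c ≤ (p.dropUntil b hb).length := SimpleGraph.dist_le _
  have h3 : (p.takeUntil b hb).length + (p.dropUntil b hb).length = p.length := by
    rw [← SimpleGraph.Walk.length_append, SimpleGraph.Walk.take_spec]
  have h4 := hconn.dist_triangle (u := a) (v := b) (w := c)
  unfold Btw
  omega

lemma dist_ne_of_adj (hT : G.IsTree) {w v : V} (h : G.Adj w v) (x : V) :
    G.dist x w ≠ G.dist x v := by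
  intro he
  have hconn := hT.isConnected
  obtain ⟨P, hPp, hPl⟩ := (hconn.preconnected x w).exists_path_of_dist
  obtain ⟨Q, hQp, hQl⟩ := (hconn.preconnected x v).exists_path_of_dist
  by_cases hvP : v ∈ P.support
  · have hbtw := btw_of_mem_support hconn P hPl hvP
    have hd : G.dist v w = 1 := SimpleGraph.dist_eq_one_iff_adj.mpr h.symm
    unfold Btw at hbtw
    omega
  · have hW : (P.concat h).IsPath := by
      rw [← SimpleGraph.Walk.isPath_reverse_iff, SimpleGraph.Walk.reverse_concat,
        SimpleGraph.Walk.cons_isPath_iff, SimpleGraph.Walk.isPath_reverse_iff,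
        SimpleGraph.Walk.support_reverse]
      exact ⟨hPp, by simpa using hvP⟩
    have heq := (hT.existsUnique_path x v).unique hW hQp
    have hlen : (P.concat h).length = P.length + 1 := SimpleGraph.Walk.length_concat _ _
    rw [heq] at hlen
    omega

lemma adj_dist_cases (hT : G.IsTree) {w v : V} (h : G.Adj w v) (x : V) :
    G.dist x w = G.dist x v + 1 ∨ G.dist x v = G.dist x w + 1 := by
  have hconn := hT.isConnected
  have d1 : G.dist v w = 1 := SimpleGraph.dist_eq_one_iff_adj.mpr h.symm
  have d2 : G.dist w v = 1 := SimpleGraph.dist_eq_one_iff_adj.mpr h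
  have t1 := hconn.dist_triangle (u := x) (v := v) (w := w)
  have t2 := hconn.dist_triangle (u := x) (v := w) (w := v)
  have h3 := dist_ne_of_adj hT h x
  omega

lemma crossing (hT : G.IsTree) {w v a b : V} (h : G.Adj w v)
    (ha : G.dist a w = G.dist a v + 1) (hb : G.dist b v = G.dist b w + 1)
    (hab : G.Adj a b) : a = v ∧ b = w := by
  have hconn := hT.isConnected
  have d1 : G.dist a b = 1 := SimpleGraph.dist_eq_one_iff_adj.mpr hab
  have d2 : G.dist b a = 1 := SimpleGraph.dist_eq_one_iff_adj.mpr hab.symm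
  have dwv : G.dist w v = 1 := SimpleGraph.dist_eq_one_iff_adj.mpr h
  have dvw : G.dist v w = 1 := SimpleGraph.dist_eq_one_iff_adj.mpr h.symm
  have hq : G.dist a v = G.dist b w := by
    have t1 := hconn.dist_triangle (u := a) (v := b) (w := w)
    have t2 := hconn.dist_triangle (u := b) (v := a) (w := v)
    omega
  obtain ⟨A, hAp, hAl⟩ := (hconn.preconnected a v).exists_path_of_dist
  obtain ⟨B, hBp, hBl⟩ := (hconn.preconnected b w).exists_path_of_dist
  have hwA : w ∉ A.support := by
    intro hw'
    have hbtw := btw_of_mem_support hconn A hAl hw'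
    unfold Btw at hbtw
    omega
  have haB : a ∉ B.support := by
    intro ha'
    have hbtw := btw_of_mem_support hconn B hBl ha'
    unfold Btw at hbtw
    omega
  have hW1 : (A.concat h.symm).IsPath := by
    rw [← SimpleGraph.Walk.isPath_reverse_iff, SimpleGraph.Walk.reverse_concat,
      SimpleGraph.Walk.cons_isPath_iff, SimpleGraph.Walk.isPath_reverse_iff,
      SimpleGraph.Walk.support_reverse]
    exact ⟨hAp, by simpa using hwA⟩
  have hW2 : (SimpleGraph.Walk.cons hab B).IsPath := hBp.cons haB
  have heq : A.concat h.symm = SimpleGraph.Walk.cons hab B :=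
    (hT.existsUnique_path a w).unique hW1 hW2
  have hvW : v ∈ (A.concat h.symm).support := by
    rw [SimpleGraph.Walk.concat_eq_append, SimpleGraph.Walk.mem_support_append_iff]
    exact Or.inl (SimpleGraph.Walk.end_mem_support A)
  rw [heq, SimpleGraph.Walk.support_cons] at hvW
  rcases List.mem_cons.mp hvW with hva | hvB
  · refine ⟨hva.symm, ?_⟩
    have hz : G.dist b w = 0 := by
      rw [← hva] at d2
      omega
    exact (hconn.dist_eq_zero_iff).mp hz
  · exfalso
    have hbtw := btw_of_mem_support hconn B hBl hvB
    unfold Btw at hbtw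
    omega

lemma cross_walk (hT : G.IsTree) {w v : V} (h : G.Adj w v) :
    ∀ {x y : V} (W : G.Walk x y), G.dist x w = G.dist x v + 1 →
      G.dist y v = G.dist y w + 1 → G.dist x v + 1 + G.dist w y ≤ W.length := by
  have hconn := hT.isConnected
  intro x y W
  induction W with
  | nil => intro h1 h2; omega
  | @cons x z y hxz W' ih =>
      intro h1 h2
      rcases adj_dist_cases hT h z with hz | hz
      · have hih := ih hz h2
        have t1 := hconn.dist_triangle (u := x) (v := z) (w := v)
        have dxz : G.dist x z = 1 := SimpleGraph.dist_eq_one_iff_adj.mpr hxz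
        simp only [SimpleGraph.Walk.length_cons]
        omega
      · obtain ⟨rfl, rfl⟩ := crossing hT h h1 hz hxz
        have hle := SimpleGraph.dist_le W'
        simp only [SimpleGraph.Walk.length_cons, SimpleGraph.dist_self]
        omega

lemma edge_cut (hT : G.IsTree) {w v x y : V} (h : G.Adj w v)
    (hx : G.dist x w = G.dist x v + 1) (hy : G.dist y v = G.dist y w + 1) :
    G.dist x y = G.dist x v + 1 + G.dist w y := by
  have hconn := hT.isConnected
  obtain ⟨P, hPl⟩ := (hconn.preconnected x y).exists_walk_length_eq_dist
  have h1 := cross_walk hT h P hx hy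
  rw [hPl] at h1
  have t1 := hconn.dist_triangle (u := x) (v := v) (w := y)
  have c1 : G.dist v y = G.dist y v := SimpleGraph.dist_comm
  have c2 : G.dist w y = G.dist y w := SimpleGraph.dist_comm
  omega

lemma sig_eq {l : ℕ} {t : Fin l → RSub G} (ht : IsAdmissible G t) {k : Fin l} {x : V}
    (hx : x ∈ (t k).verts) : sig G t x = G.dist x ((t k).root) + (k : ℕ) + 1 := by
  have hbr : IsBranch G x := ht.1 k x hx
  have hex : ∃ i, x ∈ (t i).verts := ⟨k, hx⟩
  have hu : hex.choose = k := by
    rcases ht.2 x hbr with ⟨k', _, huniq⟩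
    rw [huniq _ hex.choose_spec, huniq _ hx]
  rw [sig, dif_pos hex, hu]

lemma samePart_comm {l : ℕ} {t : Fin l → RSub G} {u v : V} :
    SamePart t u v ↔ SamePart t v u :=
  ⟨fun ⟨k, h1, h2⟩ => ⟨k, h2, h1⟩, fun ⟨k, h1, h2⟩ => ⟨k, h2, h1⟩⟩

lemma stage1_comm {l : ℕ} (t : Fin l → RSub G) (m : ℕ) (a b : V) :
    stage1 G t m a b = stage1 G t m b a := by
  have hsp : SamePart t a b ↔ SamePart t b a := samePart_comm
  unfold stage1
  split_ifs <;> first | rfl | omega | tauto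

end Toolkit

end Burn

/-- If `s` is a reduction of `t`, then `sig_s = sig_t` and, for every degree
`m` admissible for both, any tree induced by `s` of degree `m` has the same order as any tree
induced by `t` of degree `m`. -/
theorem statement6 (T : BG) (hTree : T.G.IsTree)
    (hIrr : ∀ v : T.V, deg T.G v ≠ 2)
    {l : ℕ} (s t : Fin l → RSub T.G)
    (hs : IsAdmissible T.G s) (ht : IsAdmissible T.G t)
    (hred : IsReduction T.G s t) :
    (∀ v : T.V, IsBranch T.G v → sig T.G s v = sig T.G t v) ∧
    (∀ m : ℕ, DegOK T.G s m → DegOK T.G t m →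
      ∀ A B : BG, IsInduced T s m A → IsInduced T t m B →
        Nat.card A.V = Nat.card B.V) := by
  classical
  obtain ⟨i, j, hij, w, hw, v, hv, hwv, hagree, hrooti, hrootj, hSi, hSj, hsigv⟩ := hred
  have hconn := hTree.isConnected
  -- basic uniqueness facts
  have huniq_t : ∀ {x : T.V} {k k' : Fin l}, x ∈ (t k).verts → x ∈ (t k').verts → k = k' := by
    intro x k k' h1 h2
    rcases ht.2 x (ht.1 k x h1) with ⟨k'', _, hu⟩
    rw [hu _ h1, hu _ h2]
  have huniq_s : ∀ {x : T.V} {k k' : Fin l}, x ∈ (s k).verts → x ∈ (s k').verts → k = k' := by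
    intro x k k' h1 h2
    rcases hs.2 x (hs.1 k x h1) with ⟨k'', _, hu⟩
    rw [hu _ h1, hu _ h2]
  have hvD : v ∈ Descend T.G (t j) v := by
    refine ⟨hv, ?_⟩
    show T.G.dist (t j).root v + T.G.dist v v = T.G.dist (t j).root v
    rw [SimpleGraph.dist_self]
    omega
  have hDsub : ∀ {x : T.V}, x ∈ Descend T.G (t j) v → x ∈ (t j).verts := fun hx => hx.1
  have hvnoti : v ∉ (t i).verts := fun h' => hij.ne (huniq_t h' hv)
  have hwnotj : w ∉ (t j).verts := fun h' => hij.ne (huniq_t hw h')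
  have dvw : T.G.dist v w = 1 := SimpleGraph.dist_eq_one_iff_adj.mpr hwv.symm
  have dwv : T.G.dist w v = 1 := SimpleGraph.dist_eq_one_iff_adj.mpr hwv
  -- the root of t i is on the w-side of the edge w-v
  have hri_w : T.G.dist ((t i).root) v = T.G.dist ((t i).root) w + 1 := by
    rcases adj_dist_cases hTree hwv ((t i).root) with hcase | hcase
    · exfalso
      refine hvnoti ((t i).closed w hw v ?_)
      show T.G.dist (t i).root v + T.G.dist v w = T.G.dist (t i).root w
      omega
    · exact hcase
  have hrj_v : T.G.dist ((t j).root) w = T.G.dist ((t j).root) v + 1 := by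
    rcases adj_dist_cases hTree hwv ((t j).root) with hcase | hcase
    · exact hcase
    · exfalso
      refine hwnotj ((t j).closed v hv w ?_)
      show T.G.dist (t j).root w + T.G.dist w v = T.G.dist (t j).root v
      omega
  -- every descendant of v is on the v-side
  have hDside : ∀ x, x ∈ Descend T.G (t j) v → T.G.dist x w = T.G.dist x v + 1 := by
    intro x hx
    rcases adj_dist_cases hTree hwv x with hcase | hcase
    · exact hcase
    · exfalso
      have hec := edge_cut hTree hwv (x := (t j).root) (y := x) hrj_v hcase
      refine hwnotj ((t j).closed x (hDsub hx) w ?_)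
      show T.G.dist (t j).root w + T.G.dist w x = T.G.dist (t j).root x
      omega
  -- every member of t i is on the w-side
  have hTi_w : ∀ x, x ∈ (t i).verts → T.G.dist x v = T.G.dist x w + 1 := by
    intro x hx
    rcases adj_dist_cases hTree hwv x with hcase | hcase
    · exfalso
      have hec := edge_cut hTree hwv (x := x) (y := (t i).root) hcase hri_w
      refine hvnoti ((t i).closed x hx v ?_)
      show T.G.dist (t i).root v + T.G.dist v x = T.G.dist (t i).root x
      have c1 : T.G.dist x (t i).root = T.G.dist (t i).root x := SimpleGraph.dist_comm
      have c2 : T.G.dist x v = T.G.dist v x := SimpleGraph.dist_comm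
      have c3 : T.G.dist w (t i).root = T.G.dist (t i).root w := SimpleGraph.dist_comm
      omega
    · exact hcase
  -- every member of t j is on the v-side
  have hTj_v : ∀ x, x ∈ (t j).verts → T.G.dist x w = T.G.dist x v + 1 := by
    intro x hx
    rcases adj_dist_cases hTree hwv x with hcase | hcase
    · exact hcase
    · exfalso
      have hec := edge_cut hTree hwv (x := (t j).root) (y := x) hrj_v hcase
      refine hwnotj ((t j).closed x hx w ?_)
      show T.G.dist (t j).root w + T.G.dist w x = T.G.dist (t j).root x
      omega
  have hbtw_ri : ∀ x, x ∈ Descend T.G (t j) v →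
      T.G.dist ((t i).root) v + T.G.dist v x = T.G.dist ((t i).root) x := by
    intro x hx
    have hxs := hDside x hx
    have hec := edge_cut hTree hwv (x := x) (y := (t i).root) hxs hri_w
    have c1 : T.G.dist x (t i).root = T.G.dist (t i).root x := SimpleGraph.dist_comm
    have c2 : T.G.dist x v = T.G.dist v x := SimpleGraph.dist_comm
    have c3 : T.G.dist w (t i).root = T.G.dist (t i).root w := SimpleGraph.dist_comm
    omega
  have hsv_si : v ∈ (s i).verts := by rw [hSi]; exact Set.mem_union_right _ hvD
  have hw_si : w ∈ (s i).verts := by rw [hSi]; exact Set.mem_union_left _ hw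
  have hkey : T.G.dist v ((t i).root) + (i : ℕ) = T.G.dist v ((t j).root) + (j : ℕ) := by
    have h1 := sig_eq hs hsv_si
    rw [hrooti] at h1
    have h2 := sig_eq ht hv
    omega
  -- Part 1
  have part1 : ∀ x, IsBranch T.G x → sig T.G s x = sig T.G t x := by
    intro x hx
    obtain ⟨k, hk, _⟩ := ht.2 x hx
    by_cases hki : k = i
    · subst hki
      have hxs : x ∈ (s k).verts := by rw [hSi]; exact Set.mem_union_left _ hk
      rw [sig_eq hs hxs, sig_eq ht hk, hrooti]
    · by_cases hkj : k = j
      · subst hkj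
        by_cases hxD : x ∈ Descend T.G (t k) v
        · have hxsi : x ∈ (s i).verts := by rw [hSi]; exact Set.mem_union_right _ hxD
          rw [sig_eq hs hxsi, sig_eq ht hk, hrooti]
          have hb1 := hbtw_ri x hxD
          have hb2 : T.G.dist ((t k).root) v + T.G.dist v x = T.G.dist ((t k).root) x := hxD.2
          have c1 : T.G.dist x (t i).root = T.G.dist (t i).root x := SimpleGraph.dist_comm
          have c2 : T.G.dist x (t k).root = T.G.dist (t k).root x := SimpleGraph.dist_comm
          have c3 : T.G.dist v (t i).root = T.G.dist (t i).root v := SimpleGraph.dist_comm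
          have c4 : T.G.dist v (t k).root = T.G.dist (t k).root v := SimpleGraph.dist_comm
          omega
        · have hvne : v ≠ (t k).root := by
            intro hveq
            refine hxD ⟨hk, ?_⟩
            show T.G.dist (t k).root v + T.G.dist v x = T.G.dist (t k).root x
            rw [← hveq, SimpleGraph.dist_self]
            simp
          have hxsj : x ∈ (s k).verts := by rw [hSj]; exact ⟨hk, hxD⟩
          rw [sig_eq hs hxsj, sig_eq ht hk, hrootj hvne]
      · have hxs : x ∈ (s k).verts := by rw [hagree k hki hkj]; exact hk
        rw [sig_eq hs hxs, sig_eq ht hk, hagree k hki hkj]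
  refine ⟨part1, ?_⟩
  intro m hdegs hdegt A B hA hB
  obtain ⟨ιA, cA, gA, hgA, hcA, φA, hφA⟩ := hA
  obtain ⟨ιB, cB, gB, hgB, hcB, φB, hφB⟩ := hB
  letI : Fintype T.G.edgeSet := Set.Finite.fintype (Set.toFinite _)
  -- the order of an induced tree
  have hcard : ∀ (C : BG) (c : Sym2 T.V → ℕ), (Subdiv T.G c ≃g C.G) →
      Nat.card C.V = Nat.card T.V + ∑ e : T.G.edgeSet, c e := by
    intro C c φ
    rw [← Nat.card_congr φ.toEquiv]
    show Nat.card (T.V ⊕ (Σ e : T.G.edgeSet, Fin (c e))) = _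
    rw [Nat.card_sum]
    congr 1
    rw [Nat.card_eq_fintype_card, Fintype.card_sigma]
    simp
  rw [hcard A cA φA, hcard B cB φB]
  -- symmetrized stage-1 functions
  have hFs_adj : ∀ a b : T.V, (Sym2.lift ⟨fun a b => stage1 T.G s m a b,
      fun a b => stage1_comm s m a b⟩ : Sym2 T.V → ℕ) s(a, b) = stage1 T.G s m a b :=
    fun a b => Sym2.lift_mk _ a b
  have hFt_adj : ∀ a b : T.V, (Sym2.lift ⟨fun a b => stage1 T.G t m a b,
      fun a b => stage1_comm t m a b⟩ : Sym2 T.V → ℕ) s(a, b) = stage1 T.G t m a b :=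
    fun a b => Sym2.lift_mk _ a b
  set Fs : Sym2 T.V → ℕ := Sym2.lift ⟨fun a b => stage1 T.G s m a b,
      fun a b => stage1_comm s m a b⟩ with hFsdef
  set Ft : Sym2 T.V → ℕ := Sym2.lift ⟨fun a b => stage1 T.G t m a b,
      fun a b => stage1_comm t m a b⟩ with hFtdef
  -- total count of inserted vertices
  have htot : ∀ (seq : Fin l → RSub T.G) (c : Sym2 T.V → ℕ) (g : Fin m → T.V × T.V)
      (F : Sym2 T.V → ℕ),
      (∀ a b : T.V, T.G.Adj a b → F s(a, b) = stage1 T.G seq m a b) →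
      (∀ i : Fin m, FreeIdx T.G seq m i → Stage2OK T.G seq (g i).1 (g i).2) →
      (∀ u v' : T.V, T.G.Adj u v' → c s(u, v') = stage1 T.G seq m u v' +
        ∑ i : Fin m, (if FreeIdx T.G seq m i ∧ s((g i).1, (g i).2) = s(u, v') then
          2 * (m - 1 - (i : ℕ)) + 1 else 0)) →
      ∑ e : T.G.edgeSet, c e = (∑ e : T.G.edgeSet, F e) +
        ∑ i : Fin m, (if FreeIdx T.G seq m i then 2 * (m - 1 - (i : ℕ)) + 1 else 0) := by
    intro seq c g F hF hg hc
    have hper : ∀ e : T.G.edgeSet, c e = F e +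
        ∑ i : Fin m, (if FreeIdx T.G seq m i ∧ s((g i).1, (g i).2) = (e : Sym2 T.V) then
          2 * (m - 1 - (i : ℕ)) + 1 else 0) := by
      rintro ⟨e, he⟩
      revert he
      induction e using Sym2.ind with
      | _ a b =>
        intro he
        have hadj : T.G.Adj a b := he
        show c s(a, b) = F s(a, b) + _
        rw [hc a b hadj, hF a b hadj]
    rw [Finset.sum_congr rfl (fun e _ => hper e), Finset.sum_add_distrib]
    congr 1
    rw [Finset.sum_comm]
    refine Finset.sum_congr rfl (fun i _ => ?_)
    by_cases hFr : FreeIdx T.G seq m i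
    · have hadj : T.G.Adj (g i).1 (g i).2 := (hg i hFr).1
      have hmem : s((g i).1, (g i).2) ∈ T.G.edgeSet := hadj
      rw [if_pos hFr]
      have hcond : ∀ e : T.G.edgeSet,
          (if FreeIdx T.G seq m i ∧ s((g i).1, (g i).2) = (e : Sym2 T.V) then
            2 * (m - 1 - (i : ℕ)) + 1 else 0)
          = (if e = (⟨s((g i).1, (g i).2), hmem⟩ : T.G.edgeSet) then
            2 * (m - 1 - (i : ℕ)) + 1 else 0) := by
        intro e
        refine if_congr ?_ rfl rfl
        simp only [hFr, true_and, Subtype.ext_iff, eq_comm]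
      rw [Finset.sum_congr rfl (fun e _ => hcond e), Finset.sum_ite_eq' Finset.univ]
      simp
    · simp [hFr]
  rw [htot s cA gA Fs (fun a b _ => hFs_adj a b) hgA hcA, htot t cB gB Ft (fun a b _ => hFt_adj a b) hgB hcB]
  have hvbr : IsBranch T.G v := ht.1 j v hv
  have hwbr : IsBranch T.G w := ht.1 i w hw
  have hrj_tj : (t j).root ∈ (t j).verts := (t j).root_mem ⟨v, hv⟩
  have hsigw : sig T.G t w + 1 = sig T.G t v := by
    rw [sig_eq ht hw, sig_eq ht hv]
    have c1 : T.G.dist w (t i).root = T.G.dist (t i).root w := SimpleGraph.dist_comm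
    have c2 : T.G.dist v (t i).root = T.G.dist (t i).root v := SimpleGraph.dist_comm
    omega
  have hmem_s_of_t : ∀ (x : T.V) (k : Fin l), x ∈ (t k).verts → x ∉ Descend T.G (t j) v →
      x ∈ (s k).verts := by
    intro x k hk hxD
    by_cases hki : k = i
    · subst hki; rw [hSi]; exact Set.mem_union_left _ hk
    · by_cases hkj : k = j
      · subst hkj; rw [hSj]; exact ⟨hk, hxD⟩
      · rw [hagree k hki hkj]; exact hk
  have hclaimA : ∀ a b : T.V, T.G.Adj a b → a ∈ Descend T.G (t j) v → b ∈ (t i).verts →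
      a = v ∧ b = w := fun a b hab haD hb => crossing hTree hwv (hDside a haD) (hTi_w b hb) hab
  have hclaimB0 : ∀ a b : T.V, T.G.Adj a b → a ∈ Descend T.G (t j) v → b ∈ (t j).verts →
      b ∉ Descend T.G (t j) v →
      a = v ∧ T.G.dist ((t j).root) b + 1 = T.G.dist ((t j).root) v := by
    intro a b hab haD hbj hbD
    have hbtw_a : T.G.dist (t j).root v + T.G.dist v a = T.G.dist (t j).root a := haD.2
    have dab : T.G.dist a b = 1 := SimpleGraph.dist_eq_one_iff_adj.mpr hab
    have dba : T.G.dist b a = 1 := SimpleGraph.dist_eq_one_iff_adj.mpr hab.symm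
    have hnbD : ¬ (T.G.dist (t j).root v + T.G.dist v b = T.G.dist (t j).root b) :=
      fun h' => hbD ⟨hbj, h'⟩
    have tvb : T.G.dist v b ≤ T.G.dist v a + 1 := by
      have := hconn.dist_triangle (u := v) (v := a) (w := b); omega
    have trb := hconn.dist_triangle (u := (t j).root) (v := v) (w := b)
    rcases adj_dist_cases hTree hab ((t j).root) with hc | hc
    · rcases adj_dist_cases hTree hab v with hd | hd
      · exact absurd (by omega) hnbD
      · have hec := edge_cut hTree hab.symm (x := v) (y := (t j).root) hd hc
        have c1 : T.G.dist v (t j).root = T.G.dist (t j).root v := SimpleGraph.dist_comm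
        have c2 : T.G.dist b (t j).root = T.G.dist (t j).root b := SimpleGraph.dist_comm
        have c3 : T.G.dist v a = T.G.dist a v := SimpleGraph.dist_comm
        have hav : T.G.dist v a = 0 := by omega
        have hav' : v = a := (hconn.dist_eq_zero_iff).mp hav
        exact ⟨hav'.symm, by omega⟩
    · exact absurd (by omega) hnbD
  have hboth : ∀ a b : T.V, a ∈ Descend T.G (t j) v → b ∈ Descend T.G (t j) v →
      (SamePart s a b ↔ SamePart t a b) := by
    intro a b haD hbD
    constructor
    · intro _; exact ⟨j, hDsub haD, hDsub hbD⟩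
    · intro _
      exact ⟨i, by rw [hSi]; exact Set.mem_union_right _ haD,
        by rw [hSi]; exact Set.mem_union_right _ hbD⟩
  have hnone : ∀ a b : T.V, IsBranch T.G a → IsBranch T.G b → a ∉ Descend T.G (t j) v →
      b ∉ Descend T.G (t j) v → (SamePart s a b ↔ SamePart t a b) := by
    intro a b hba hbb haD hbD
    obtain ⟨ka, hka, _⟩ := ht.2 a hba
    obtain ⟨kb, hkb, _⟩ := ht.2 b hbb
    constructor
    · rintro ⟨κ, h1, h2⟩
      have e1 : κ = ka := huniq_s h1 (hmem_s_of_t a ka hka haD)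
      have e2 : κ = kb := huniq_s h2 (hmem_s_of_t b kb hkb hbD)
      have e3 : ka = kb := e1.symm.trans e2
      exact ⟨ka, hka, by rwa [← e3] at hkb⟩
    · rintro ⟨κ, h1, h2⟩
      exact ⟨κ, hmem_s_of_t a κ h1 haD, hmem_s_of_t b κ h2 hbD⟩
  have hone : ∀ a b : T.V, T.G.Adj a b → a ∈ Descend T.G (t j) v →
      b ∉ Descend T.G (t j) v → IsBranch T.G b →
      s(a, b) ≠ s(w, v) → ¬(b ∈ (t j).verts ∧ a = v) →
      (SamePart s a b ↔ SamePart t a b) := by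
    intro a b hab haD hbD hbb hne1 hne2
    obtain ⟨kb, hkb, _⟩ := ht.2 b hbb
    have haj : a ∈ (t j).verts := hDsub haD
    have hasi : a ∈ (s i).verts := by rw [hSi]; exact Set.mem_union_right _ haD
    by_cases hkbi : kb = i
    · subst hkbi
      obtain ⟨rfl, rfl⟩ := hclaimA a b hab haD hkb
      exact absurd Sym2.eq_swap hne1
    · by_cases hkbj : kb = j
      · subst hkbj
        exact absurd ⟨hkb, (hclaimB0 a b hab haD hkb hbD).1⟩ hne2
      · constructor
        · rintro ⟨κ, h1, h2⟩
          exfalso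
          have e1 : κ = i := huniq_s h1 hasi
          have h2' : b ∈ (s i).verts := by rw [← e1]; exact h2
          rw [hSi] at h2'
          rcases h2' with h2' | h2'
          · exact hkbi (huniq_t hkb h2')
          · exact hbD h2'
        · rintro ⟨κ, h1, h2⟩
          exfalso
          have e1 : κ = j := huniq_t h1 haj
          have e2 : κ = kb := huniq_t h2 hkb
          exact hkbj (e2.symm.trans e1)
  have hstage_of : ∀ a b : T.V, ((IsBranch T.G a ∧ IsBranch T.G b) →
      (SamePart s a b ↔ SamePart t a b)) → stage1 T.G s m a b = stage1 T.G t m a b := by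
    intro a b hiff
    unfold stage1
    by_cases hba : IsBranch T.G a
    · by_cases hbb : IsBranch T.G b
      · have hout : ∀ X Y : ℕ, (if IsBranch T.G a ∧ IsBranch T.G b then X else Y) = X :=
          fun X Y => if_pos ⟨hba, hbb⟩
        rw [hout, hout, part1 a hba, part1 b hbb]
        exact if_congr (hiff ⟨hba, hbb⟩) rfl rfl
      · have hout : ∀ X Y : ℕ, (if IsBranch T.G a ∧ IsBranch T.G b then X else Y) = Y :=
          fun X Y => if_neg (fun h => hbb h.2)
        rw [hout, hout, if_pos hba, if_pos hba, part1 a hba]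
    · have hout : ∀ X Y : ℕ, (if IsBranch T.G a ∧ IsBranch T.G b then X else Y) = Y :=
        fun X Y => if_neg (fun h => hba h.1)
      by_cases hbb : IsBranch T.G b
      · rw [hout, hout, if_neg hba, if_neg hba, if_pos hbb, if_pos hbb, part1 b hbb]
      · rw [hout, hout, if_neg hba, if_neg hba, if_neg hbb, if_neg hbb]
  have hsum_ind : ∀ (e0 : Sym2 T.V) (he0 : e0 ∈ T.G.edgeSet) (K : ℕ),
      (∑ e : T.G.edgeSet, if (e : Sym2 T.V) = e0 then K else 0) = K := by
    intro e0 he0 K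
    have hcond : ∀ e : T.G.edgeSet, (if (e : Sym2 T.V) = e0 then K else 0)
        = (if e = (⟨e0, he0⟩ : T.G.edgeSet) then K else 0) := by
      intro e
      refine if_congr ?_ rfl rfl
      rw [Subtype.ext_iff]
    rw [Finset.sum_congr rfl (fun e _ => hcond e), Finset.sum_ite_eq' Finset.univ]
    simp
  have hFs_e1 : stage1 T.G s m w v = 0 := by
    unfold stage1
    rw [if_pos (show IsBranch T.G w ∧ IsBranch T.G v from ⟨hwbr, hvbr⟩),
      if_pos (show SamePart s w v from ⟨i, hw_si, hsv_si⟩)]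
  have hFt_e1 : stage1 T.G t m w v = 2 * m - sig T.G t w - sig T.G t v := by
    unfold stage1
    rw [if_pos (show IsBranch T.G w ∧ IsBranch T.G v from ⟨hwbr, hvbr⟩), if_neg]
    rintro ⟨κ, h1, h2⟩
    exact hij.ne ((huniq_t h1 hw).symm.trans (huniq_t h2 hv))
  by_cases hvroot : v = (t j).root
  · -- CASE B : v is the root of T_j, so S_j is empty
    have hDall : ∀ x, x ∈ (t j).verts → x ∈ Descend T.G (t j) v := by
      intro x hx
      refine ⟨hx, ?_⟩
      show T.G.dist (t j).root v + T.G.dist v x = T.G.dist (t j).root x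
      rw [← hvroot, SimpleGraph.dist_self]
      omega
    have hsj_empty : (s j).verts = ∅ := by
      rw [hSj, Set.diff_eq_empty]
      intro x hx; exact hDall x hx
    have hdvrj : T.G.dist v ((t j).root) = 0 := by rw [hvroot, SimpleGraph.dist_self]
    have hjm : (j : ℕ) + 1 < m := by
      have h1 := hdegt v hvbr
      rw [sig_eq ht hv] at h1
      omega
    have hKval : sig T.G t v = (j : ℕ) + 1 := by rw [sig_eq ht hv]; omega
    have hfree_s_κ0 : FreeIdx T.G s m ⟨(j : ℕ), by omega⟩ := by
      intro h
      have he : (⟨(j : ℕ), h⟩ : Fin l) = j := Fin.ext rfl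
      rw [he]
      exact hsj_empty
    have hfree_t_κ0 : ¬ FreeIdx T.G t m ⟨(j : ℕ), by omega⟩ := by
      intro h
      have h' := h j.isLt
      have he : (⟨(j : ℕ), j.isLt⟩ : Fin l) = j := Fin.ext rfl
      rw [he] at h'
      have hv' := hv
      rw [h'] at hv'
      exact Set.notMem_empty v hv'
    have hfreeB : ∀ κ : Fin m, κ ≠ ⟨(j : ℕ), by omega⟩ →
        (FreeIdx T.G s m κ ↔ FreeIdx T.G t m κ) := by
      intro κ hκ
      constructor <;> intro hfr h <;> have hfr' := hfr h
      · by_cases hki : (⟨(κ : ℕ), h⟩ : Fin l) = i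
        · exfalso; rw [hki] at hfr'; exact Set.notMem_empty w (hfr' ▸ hw_si)
        · by_cases hkj : (⟨(κ : ℕ), h⟩ : Fin l) = j
          · exact absurd (Fin.ext (show (κ : ℕ) = (j : ℕ) from congrArg Fin.val hkj)) hκ
          · rw [← hagree _ hki hkj]; exact hfr'
      · by_cases hki : (⟨(κ : ℕ), h⟩ : Fin l) = i
        · exfalso; rw [hki] at hfr'; exact Set.notMem_empty w (hfr' ▸ hw)
        · by_cases hkj : (⟨(κ : ℕ), h⟩ : Fin l) = j
          · exact absurd (Fin.ext (show (κ : ℕ) = (j : ℕ) from congrArg Fin.val hkj)) hκ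
          · rw [hagree _ hki hkj]; exact hfr'
    have hSS : (∑ κ : Fin m, if FreeIdx T.G s m κ then 2 * (m - 1 - (κ : ℕ)) + 1 else 0)
        = (∑ κ : Fin m, if FreeIdx T.G t m κ then 2 * (m - 1 - (κ : ℕ)) + 1 else 0)
          + (2 * (m - 1 - (j : ℕ)) + 1) := by
      have hptw : ∀ κ : Fin m, (if FreeIdx T.G s m κ then 2 * (m - 1 - (κ : ℕ)) + 1 else 0)
          = (if FreeIdx T.G t m κ then 2 * (m - 1 - (κ : ℕ)) + 1 else 0)
            + (if κ = ⟨(j : ℕ), by omega⟩ then 2 * (m - 1 - (j : ℕ)) + 1 else 0) := by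
        intro κ
        by_cases hκ : κ = ⟨(j : ℕ), by omega⟩
        · subst hκ
          rw [if_pos hfree_s_κ0, if_neg hfree_t_κ0, if_pos rfl]
          simp
        · rw [if_neg hκ, add_zero]
          exact if_congr (hfreeB κ hκ) rfl rfl
      rw [Finset.sum_congr rfl (fun κ _ => hptw κ), Finset.sum_add_distrib]
      congr 1
      rw [Finset.sum_ite_eq' Finset.univ]
      simp
    have hstageB : ∀ e : T.G.edgeSet, Fs (e : Sym2 T.V)
        + (if (e : Sym2 T.V) = s(w, v) then 2 * (m - 1 - (j : ℕ)) + 1 else 0)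
        = Ft (e : Sym2 T.V) := by
      rintro ⟨e, he⟩
      revert he
      induction e using Sym2.ind with
      | _ a b =>
        intro he
        have hadj : T.G.Adj a b := he
        show Fs s(a, b) + _ = Ft s(a, b)
        rw [hFs_adj, hFt_adj]
        by_cases h1 : s(a, b) = s(w, v)
        · rw [if_pos h1]
          have hsw := hsigw
          rcases Sym2.eq_iff.mp h1 with ⟨ha', hb'⟩ | ⟨ha', hb'⟩
          · rw [ha', hb', hFs_e1, hFt_e1, hKval]
            omega
          · rw [ha', hb', stage1_comm s m, stage1_comm t m, hFs_e1, hFt_e1, hKval]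
            omega
        · rw [if_neg h1, add_zero]
          apply hstage_of
          rintro ⟨hba, hbb⟩
          by_cases haD : a ∈ Descend T.G (t j) v
          · by_cases hbD : b ∈ Descend T.G (t j) v
            · exact hboth a b haD hbD
            · refine hone a b hadj haD hbD hbb h1 ?_
              rintro ⟨hbj, rfl⟩
              exact hbD (hDall b hbj)
          · by_cases hbD : b ∈ Descend T.G (t j) v
            · have h1' : s(b, a) ≠ s(w, v) := fun hq => h1 (Sym2.eq_swap.trans hq)
              refine samePart_comm.trans ((hone b a hadj.symm hbD haD hba h1' ?_).trans
                samePart_comm)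
              rintro ⟨haj, rfl⟩
              exact haD (hDall a haj)
            · exact hnone a b hba hbb haD hbD
    have hFsum : (∑ e : T.G.edgeSet, Fs (e : Sym2 T.V)) + (2 * (m - 1 - (j : ℕ)) + 1)
        = ∑ e : T.G.edgeSet, Ft (e : Sym2 T.V) := by
      have h' := Finset.sum_congr rfl (fun (e : T.G.edgeSet) (_ : e ∈ Finset.univ) => hstageB e)
      rw [Finset.sum_add_distrib, hsum_ind s(w, v) hwv (2 * (m - 1 - (j : ℕ)) + 1)] at h'
      exact h'
    omega
  · -- CASE A : v is not the root of T_j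
    obtain ⟨Q, hQl⟩ := (hconn.preconnected v ((t j).root)).exists_walk_length_eq_dist
    have hdvrj : T.G.dist v ((t j).root) ≠ 0 :=
      fun h0 => hvroot ((hconn.dist_eq_zero_iff).mp h0)
    obtain ⟨p, hpadj, hpd⟩ : ∃ p : T.V, T.G.Adj v p ∧
        T.G.dist p ((t j).root) + 1 = T.G.dist v ((t j).root) := by
      cases Q with
      | nil => simp at hQl; omega
      | @cons _ z _ hadj Q' =>
        refine ⟨z, hadj, ?_⟩
        have h1 := SimpleGraph.dist_le Q'
        have h2 : Q'.length + 1 = T.G.dist v ((t j).root) := by simpa using hQl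
        have h3 := hconn.dist_triangle (u := v) (v := z) (w := (t j).root)
        have dvz : T.G.dist v z = 1 := SimpleGraph.dist_eq_one_iff_adj.mpr hadj
        omega
    have dvp : T.G.dist v p = 1 := SimpleGraph.dist_eq_one_iff_adj.mpr hpadj
    have dpv : T.G.dist p v = 1 := SimpleGraph.dist_eq_one_iff_adj.mpr hpadj.symm
    have hbtw_p : T.G.dist ((t j).root) p + T.G.dist p v = T.G.dist ((t j).root) v := by
      have c1 : T.G.dist p (t j).root = T.G.dist (t j).root p := SimpleGraph.dist_comm
      have c2 : T.G.dist v (t j).root = T.G.dist (t j).root v := SimpleGraph.dist_comm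
      omega
    have hp_tj : p ∈ (t j).verts := (t j).closed v hv p hbtw_p
    have hp_notD : p ∉ Descend T.G (t j) v := by
      rintro ⟨-, hbt⟩
      have hbt' : T.G.dist (t j).root v + T.G.dist v p = T.G.dist (t j).root p := hbt
      have c1 : T.G.dist p (t j).root = T.G.dist (t j).root p := SimpleGraph.dist_comm
      have c2 : T.G.dist v (t j).root = T.G.dist (t j).root v := SimpleGraph.dist_comm
      omega
    have hp_sj : p ∈ (s j).verts := by rw [hSj]; exact ⟨hp_tj, hp_notD⟩
    have hsigp : sig T.G t p + 1 = sig T.G t v := by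
      rw [sig_eq ht hp_tj, sig_eq ht hv]
      have c1 : T.G.dist p (t j).root = T.G.dist (t j).root p := SimpleGraph.dist_comm
      have c2 : T.G.dist v (t j).root = T.G.dist (t j).root v := SimpleGraph.dist_comm
      omega
    have hwnep : w ≠ p := fun h' => hij.ne (huniq_t hw (h' ▸ hp_tj))
    have hne12 : s(w, v) ≠ s(v, p) := by
      intro hq
      rcases Sym2.eq_iff.mp hq with ⟨h1, -⟩ | ⟨h1, -⟩
      · exact hwv.ne h1
      · exact hwnep h1
    have hp_unique : ∀ b : T.V, T.G.Adj v b →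
        T.G.dist ((t j).root) b + 1 = T.G.dist ((t j).root) v → b = p := by
      intro b hvb hdb
      have dvb : T.G.dist v b = 1 := SimpleGraph.dist_eq_one_iff_adj.mpr hvb
      rcases adj_dist_cases hTree hvb.symm p with hc | hc
      · exfalso
        have hec := edge_cut hTree hvb.symm (x := p) (y := (t j).root) hc (by omega)
        have c1 : T.G.dist p (t j).root = T.G.dist (t j).root p := SimpleGraph.dist_comm
        have c2 : T.G.dist b (t j).root = T.G.dist (t j).root b := SimpleGraph.dist_comm
        have c3 : T.G.dist v (t j).root = T.G.dist (t j).root v := SimpleGraph.dist_comm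
        omega
      · have hz : T.G.dist p b = 0 := by omega
        exact ((hconn.dist_eq_zero_iff).mp hz).symm
    have hpbr : IsBranch T.G p := ht.1 j p hp_tj
    have hFs_e2 : stage1 T.G s m v p = 2 * m - sig T.G s v - sig T.G s p := by
      unfold stage1
      rw [if_pos (show IsBranch T.G v ∧ IsBranch T.G p from ⟨hvbr, hpbr⟩), if_neg]
      rintro ⟨κ, h1, h2⟩
      have e1 : κ = i := huniq_s h1 hsv_si
      have e2 : κ = j := huniq_s h2 hp_sj
      exact hij.ne (e1.symm.trans e2)
    have hFt_e2 : stage1 T.G t m v p = 0 := by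
      unfold stage1
      rw [if_pos (show IsBranch T.G v ∧ IsBranch T.G p from ⟨hvbr, hpbr⟩),
        if_pos (show SamePart t v p from ⟨j, hv, hp_tj⟩)]
    have hrj_notD : (t j).root ∉ Descend T.G (t j) v := by
      rintro ⟨-, hbt⟩
      have hbt' : T.G.dist (t j).root v + T.G.dist v (t j).root
          = T.G.dist (t j).root (t j).root := hbt
      rw [SimpleGraph.dist_self] at hbt'
      omega
    have hrj_sj : (t j).root ∈ (s j).verts := by rw [hSj]; exact ⟨hrj_tj, hrj_notD⟩
    have hfreeA : ∀ κ : Fin m, FreeIdx T.G s m κ ↔ FreeIdx T.G t m κ := by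
      intro κ
      constructor <;> intro hfr h <;> have hfr' := hfr h
      · by_cases hki : (⟨(κ : ℕ), h⟩ : Fin l) = i
        · exfalso; rw [hki] at hfr'; exact Set.notMem_empty w (hfr' ▸ hw_si)
        · by_cases hkj : (⟨(κ : ℕ), h⟩ : Fin l) = j
          · exfalso; rw [hkj] at hfr'; exact Set.notMem_empty _ (hfr' ▸ hrj_sj)
          · rw [← hagree _ hki hkj]; exact hfr'
      · by_cases hki : (⟨(κ : ℕ), h⟩ : Fin l) = i
        · exfalso; rw [hki] at hfr'; exact Set.notMem_empty w (hfr' ▸ hw)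
        · by_cases hkj : (⟨(κ : ℕ), h⟩ : Fin l) = j
          · exfalso; rw [hkj] at hfr'; exact Set.notMem_empty v (hfr' ▸ hv)
          · rw [hagree _ hki hkj]; exact hfr'
    have hSSeq : (∑ κ : Fin m, if FreeIdx T.G s m κ then 2 * (m - 1 - (κ : ℕ)) + 1 else 0)
        = (∑ κ : Fin m, if FreeIdx T.G t m κ then 2 * (m - 1 - (κ : ℕ)) + 1 else 0) :=
      Finset.sum_congr rfl fun κ _ => if_congr (hfreeA κ) rfl rfl
    have hstageA : ∀ e : T.G.edgeSet, Fs (e : Sym2 T.V)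
        + (if (e : Sym2 T.V) = s(w, v) then 2 * m - sig T.G t w - sig T.G t v else 0)
        = Ft (e : Sym2 T.V)
        + (if (e : Sym2 T.V) = s(v, p) then 2 * m - sig T.G t w - sig T.G t v else 0) := by
      rintro ⟨e, he⟩
      revert he
      induction e using Sym2.ind with
      | _ a b =>
        intro he
        have hadj : T.G.Adj a b := he
        show Fs s(a, b) + _ = Ft s(a, b) + _
        rw [hFs_adj, hFt_adj]
        by_cases h1 : s(a, b) = s(w, v)
        · rw [if_pos h1, if_neg (fun h2 => hne12 (h1.symm.trans h2)), add_zero]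
          rcases Sym2.eq_iff.mp h1 with ⟨ha', hb'⟩ | ⟨ha', hb'⟩
          · rw [ha', hb', hFs_e1, hFt_e1]
            omega
          · rw [ha', hb', stage1_comm s m, stage1_comm t m, hFs_e1, hFt_e1]
            omega
        · by_cases h2 : s(a, b) = s(v, p)
          · rw [if_neg h1, if_pos h2, add_zero]
            have hsw := hsigw
            have hsp' := hsigp
            rcases Sym2.eq_iff.mp h2 with ⟨ha', hb'⟩ | ⟨ha', hb'⟩
            · rw [ha', hb', hFs_e2, hFt_e2, part1 v hvbr, part1 p hpbr]
              omega
            · rw [ha', hb', stage1_comm s m, stage1_comm t m, hFs_e2, hFt_e2, part1 v hvbr,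
                part1 p hpbr]
              omega
          · rw [if_neg h1, if_neg h2, add_zero, add_zero]
            apply hstage_of
            rintro ⟨hba, hbb⟩
            by_cases haD : a ∈ Descend T.G (t j) v
            · by_cases hbD : b ∈ Descend T.G (t j) v
              · exact hboth a b haD hbD
              · refine hone a b hadj haD hbD hbb h1 ?_
                rintro ⟨hbj, hav⟩
                have hadj' : T.G.Adj v b := hav ▸ hadj
                have hbp : b = p := hp_unique b hadj' (hclaimB0 v b hadj' hvD hbj hbD).2
                exact h2 (by rw [hbp, hav])
            · by_cases hbD : b ∈ Descend T.G (t j) v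
              · have h1' : s(b, a) ≠ s(w, v) := fun hq => h1 (Sym2.eq_swap.trans hq)
                refine samePart_comm.trans ((hone b a hadj.symm hbD haD hba h1' ?_).trans
                  samePart_comm)
                rintro ⟨haj, hbv⟩
                have hadj' : T.G.Adj v a := hbv ▸ hadj.symm
                have hap : a = p := hp_unique a hadj' (hclaimB0 v a hadj' hvD haj haD).2
                refine h2 ?_
                rw [hap, hbv]
                exact Sym2.eq_swap
              · exact hnone a b hba hbb haD hbD
    have hFsum : (∑ e : T.G.edgeSet, Fs (e : Sym2 T.V))
          + (2 * m - sig T.G t w - sig T.G t v)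
        = (∑ e : T.G.edgeSet, Ft (e : Sym2 T.V))
          + (2 * m - sig T.G t w - sig T.G t v) := by
      have h' := Finset.sum_congr rfl (fun (e : T.G.edgeSet) (_ : e ∈ Finset.univ) => hstageA e)
      rw [Finset.sum_add_distrib, Finset.sum_add_distrib,
        hsum_ind s(w, v) hwv (2 * m - sig T.G t w - sig T.G t v),
        hsum_ind s(v, p) hpadj (2 * m - sig T.G t w - sig T.G t v)] at h'
      exact h'
    omega
end
end

section
/- Let T be a homeomorphically irreducible tree. Suppose s and s′ are T-admissible sequences with the same signature. Then for any degree m admissible for both, the order of any tree induced by s of degree m equals the order of any tree induced by s′ of degree m. -/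
open scoped Classical

noncomputable section

namespace Burn
section Aux
set_option linter.unusedSectionVars false
variable {V : Type} [DecidableEq V] {G : SimpleGraph V}


/-- In a tree, the distance equals the length of any path. -/
lemma tree_dist_eq_length (hT : G.IsTree) {u v : V} (p : G.Walk u v) (hp : p.IsPath) :
    G.dist u v = p.length := by
  obtain ⟨q, hq, hql⟩ := (hT.isConnected u v).exists_path_of_dist
  rw [← hql]
  congr 1
  exact ((hT.existsUnique_path u v).unique hq hp) ▸ rfl

/-- In a tree, adjacent vertices have distances to `r` differing by one. -/
lemma tree_adj_dist (hT : G.IsTree) {r u v : V} (h : G.Adj u v) :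
    G.dist r v = G.dist r u + 1 ∨ G.dist r u = G.dist r v + 1 := by
  obtain ⟨p, hp⟩ := (hT.existsUnique_path r u)
  by_cases hv : v ∈ p.support
  · right
    have h1 : G.dist r v = (p.takeUntil v hv).length := tree_dist_eq_length hT _ (hp.1.takeUntil hv)
    have h2 : G.dist v u = (p.dropUntil v hv).length := tree_dist_eq_length hT _ (hp.1.dropUntil hv)
    have h3 : G.dist v u = 1 := by rw [SimpleGraph.dist_eq_one_iff_adj]; exact h.symm
    have h4 : (p.takeUntil v hv).length + (p.dropUntil v hv).length = p.length := by
      rw [← SimpleGraph.Walk.length_append, SimpleGraph.Walk.take_spec]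
    have h5 : G.dist r u = p.length := tree_dist_eq_length hT _ hp.1
    omega
  · left
    have hp2 : (SimpleGraph.Walk.cons h.symm p.reverse).IsPath := by
      rw [SimpleGraph.Walk.cons_isPath_iff]
      exact ⟨hp.1.reverse, by simpa using hv⟩
    have := tree_dist_eq_length hT _ hp2
    rw [SimpleGraph.dist_comm]
    rw [this]
    simp [tree_dist_eq_length hT p hp.1]

lemma tree_parent (hT : G.IsTree) {r v : V} (hv : v ≠ r) :
    ∃! w : V, G.Adj v w ∧ G.dist r w + 1 = G.dist r v := by
  have key : ∀ w : V, (G.Adj v w ∧ G.dist r w + 1 = G.dist r v) →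
      ∃ (p : G.Walk v r), p.IsPath ∧ p.getVert 1 = w := by
    intro w ⟨hadj, hd⟩
    obtain ⟨q, hq⟩ := hT.existsUnique_path w r
    have hql : G.dist r w = q.length := by
      rw [SimpleGraph.dist_comm]; exact tree_dist_eq_length hT q hq.1
    have hvq : v ∉ q.support := by
      intro hmem
      have h1 : G.dist v r ≤ (q.dropUntil v hmem).length := SimpleGraph.dist_le _
      have h2 : (q.dropUntil v hmem).length ≤ q.length := SimpleGraph.Walk.length_dropUntil_le _ hmem
      rw [SimpleGraph.dist_comm] at h1
      omega
    refine ⟨SimpleGraph.Walk.cons hadj q, ?_, ?_⟩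
    · rw [SimpleGraph.Walk.cons_isPath_iff]; exact ⟨hq.1, hvq⟩
    · rw [SimpleGraph.Walk.getVert_cons_succ, SimpleGraph.Walk.getVert_zero]
  -- existence
  obtain ⟨p, hp⟩ := hT.existsUnique_path v r
  have hlen : G.dist r v = p.length := by
    rw [SimpleGraph.dist_comm]; exact tree_dist_eq_length hT p hp.1
  have hpos : 0 < p.length := by
    rcases Nat.eq_zero_or_pos p.length with h0 | h
    · exact absurd (SimpleGraph.Walk.eq_of_length_eq_zero h0) hv
    · exact h
  cases p with
  | nil => simp at hpos
  | cons hadj q =>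
    rename_i w
    have hp1 : (SimpleGraph.Walk.cons hadj q).IsPath := hp.1
    rw [SimpleGraph.Walk.cons_isPath_iff] at hp1
    have hq : q.IsPath ∧ v ∉ q.support := hp1
    have hqlen : G.dist r w = q.length := by
      rw [SimpleGraph.dist_comm]; exact tree_dist_eq_length hT q hq.1
    refine ⟨w, ⟨hadj, by simp at hlen; omega⟩, ?_⟩
    intro w' hw'
    obtain ⟨p', hp', hg⟩ := key w' hw'
    have : p' = SimpleGraph.Walk.cons hadj q := (hT.existsUnique_path v r).unique hp' hp.1
    rw [this] at hg
    rw [SimpleGraph.Walk.getVert_cons_succ, SimpleGraph.Walk.getVert_zero] at hg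
    exact hg.symm

end Aux
end Burn

namespace Burn
section Aux2
set_option linter.unusedSectionVars false
set_option maxHeartbeats 1000000
variable {V : Type} [DecidableEq V] [Fintype V] {G : SimpleGraph V} {l : ℕ}
  {t : Fin l → RSub G} {m : ℕ}

lemma sig_mem (ht : IsAdmissible G t) {i : Fin l} {v : V} (hv : v ∈ (t i).verts) :
    sig G t v = G.dist v ((t i).root) + (i : ℕ) + 1 := by
  have h : ∃ j : Fin l, v ∈ (t j).verts := ⟨i, hv⟩
  have hb : IsBranch G v := ht.1 i v hv
  have : h.choose = i := (ht.2 v hb).unique h.choose_spec hv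
  rw [sig, dif_pos h, this]

lemma sig_lt (hm : DegOK G t m) {v : V} (hb : IsBranch G v) : sig G t v < m := hm v hb

lemma sig_root (ht : IsAdmissible G t) {j : Fin l} (hne : ((t j).verts).Nonempty) :
    sig G t ((t j).root) = (j : ℕ) + 1 := by
  rw [sig_mem ht ((t j).root_mem hne), SimpleGraph.dist_self]
  omega

lemma root_branch (ht : IsAdmissible G t) {j : Fin l} (hne : ((t j).verts).Nonempty) :
    IsBranch G ((t j).root) := ht.1 j _ ((t j).root_mem hne)

lemma part_lt (ht : IsAdmissible G t) (hm : DegOK G t m) {j : Fin l}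
    (hne : ((t j).verts).Nonempty) : (j : ℕ) + 1 < m := by
  have := hm _ (root_branch ht hne)
  rwa [sig_root ht hne] at this

/-- `ℤ`-valued per-edge Stage-1-plus-defect function. -/
noncomputable def baseZ (G : SimpleGraph V) (m : ℕ) (σ : V → ℕ) : Sym2 V → ℤ :=
  Sym2.lift ⟨fun u v =>
    if IsBranch G u ∧ IsBranch G v then 2*(m:ℤ) - σ u - σ v
    else if IsBranch G u then (m:ℤ) - σ u - 1
    else if IsBranch G v then (m:ℤ) - σ v - 1 else 0, by
      intro u v
      by_cases h1 : IsBranch G u <;> by_cases h2 : IsBranch G v <;> simp [h1, h2] <;> ring⟩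

lemma baseZ_mk (σ : V → ℕ) (u v : V) : baseZ G m σ s(u, v) =
    (if IsBranch G u ∧ IsBranch G v then 2*(m:ℤ) - σ u - σ v
    else if IsBranch G u then (m:ℤ) - σ u - 1
    else if IsBranch G v then (m:ℤ) - σ v - 1 else 0) := by
  simp [baseZ]

lemma samePart_symm {u v : V} (h : SamePart t u v) : SamePart t v u := by
  obtain ⟨i, h1, h2⟩ := h; exact ⟨i, h2, h1⟩

/-- `ℤ`-valued defect function: nonzero only on internal edges within a common part. -/
noncomputable def defZ (G : SimpleGraph V) (t : Fin l → RSub G) (m : ℕ) : Sym2 V → ℤ :=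
  Sym2.lift ⟨fun u v =>
    if IsBranch G u ∧ IsBranch G v ∧ SamePart t u v
      then 2*(m:ℤ) - sig G t u - sig G t v else 0, by
      intro u v
      have hsp : SamePart t u v ↔ SamePart t v u := ⟨samePart_symm, samePart_symm⟩
      by_cases h1 : IsBranch G u <;> by_cases h2 : IsBranch G v <;>
        by_cases h3 : SamePart t u v <;>
        simp [h1, h2, h3, hsp.symm, ← hsp] <;> ring⟩

lemma defZ_mk (u v : V) : defZ G t m s(u, v) =
    (if IsBranch G u ∧ IsBranch G v ∧ SamePart t u v
      then 2*(m:ℤ) - sig G t u - sig G t v else 0) := by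
  simp [defZ]

/-- Stage 1 decomposes as base minus defect (over `ℤ`). -/
lemma stage1_cast (ht : IsAdmissible G t) (hm : DegOK G t m) (u v : V) :
    (stage1 G t m u v : ℤ) = baseZ G m (sig G t) s(u, v) - defZ G t m s(u, v) := by
  rw [baseZ_mk, defZ_mk, stage1]
  by_cases h1 : IsBranch G u <;> by_cases h2 : IsBranch G v
  · have hu := sig_lt hm h1
    have hv := sig_lt hm h2
    by_cases h3 : SamePart t u v <;> simp [h1, h2, h3] <;> omega
  · have hu := sig_lt hm h1
    simp [h1, h2]; omega
  · have hv := sig_lt hm h2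
    simp [h1, h2]; omega
  · simp [h1, h2]

end Aux2
end Burn

namespace Burn
section Aux3
set_option linter.unusedSectionVars false
set_option maxHeartbeats 1000000
variable {V : Type} [DecidableEq V] [Fintype V] {G : SimpleGraph V} {l : ℕ}
  {t : Fin l → RSub G} {m : ℕ}

/-- Symmetrized `2m - sig u - sig v`. -/
noncomputable def sigSum (G : SimpleGraph V) (t : Fin l → RSub G) (m : ℕ) : Sym2 V → ℤ :=
  Sym2.lift ⟨fun u v => 2*(m:ℤ) - sig G t u - sig G t v, by intro u v; ring⟩

lemma sigSum_mk (u v : V) : sigSum G t m s(u, v) = 2*(m:ℤ) - sig G t u - sig G t v := by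
  simp [sigSum]

/-- The parent of `v` towards `r`. -/
noncomputable def par (G : SimpleGraph V) (r v : V) : V :=
  if h : ∃ w, G.Adj v w ∧ G.dist r w + 1 = G.dist r v then h.choose else v

lemma par_spec (hT : G.IsTree) {r v : V} (hv : v ≠ r) :
    G.Adj v (par G r v) ∧ G.dist r (par G r v) + 1 = G.dist r v := by
  have h : ∃ w, G.Adj v w ∧ G.dist r w + 1 = G.dist r v := (tree_parent hT hv).exists
  rw [par, dif_pos h]
  exact h.choose_spec

lemma par_unique (hT : G.IsTree) {r v w : V} (hv : v ≠ r)
    (h1 : G.Adj v w) (h2 : G.dist r w + 1 = G.dist r v) : w = par G r v :=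
  (tree_parent hT hv).unique ⟨h1, h2⟩ (par_spec hT hv)

lemma par_in (hT : G.IsTree) (ht : IsAdmissible G t) {j : Fin l} {v : V}
    (hv : v ∈ (t j).verts) (hne : v ≠ (t j).root) :
    G.Adj v (par G ((t j).root) v) ∧ (par G ((t j).root) v) ∈ (t j).verts ∧
      sig G t (par G ((t j).root) v) + 1 = sig G t v := by
  obtain ⟨hadj, hd⟩ := par_spec hT (r := (t j).root) hne
  have h1 : G.dist (par G ((t j).root) v) v = 1 := by
    rw [SimpleGraph.dist_eq_one_iff_adj]; exact hadj.symm
  have hpmem : (par G ((t j).root) v) ∈ (t j).verts := by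
    apply (t j).closed v hv
    show G.dist ((t j).root) (par G ((t j).root) v)
        + G.dist (par G ((t j).root) v) v = G.dist ((t j).root) v
    omega
  refine ⟨hadj, hpmem, ?_⟩
  rw [sig_mem ht hv, sig_mem ht hpmem]
  have e1 : G.dist (par G ((t j).root) v) ((t j).root)
      = G.dist ((t j).root) (par G ((t j).root) v) := SimpleGraph.dist_comm
  have e2 : G.dist v ((t j).root) = G.dist ((t j).root) v := SimpleGraph.dist_comm
  omega

/-- The per-part identity. -/
lemma part_sum (hT : G.IsTree) (ht : IsAdmissible G t) (j : Fin l) :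
    ∑ e ∈ G.edgeFinset.filter (fun e => ∀ x ∈ e, x ∈ (t j).verts), sigSum G t m e
      + (if ((t j).verts).Nonempty then 2*(m:ℤ) - 2*((j:ℕ):ℤ) - 1 else 0)
    = ∑ v ∈ (Finset.univ.filter (fun v => IsBranch G v)).filter (fun v => v ∈ (t j).verts),
        (2*(m:ℤ) - 2*((sig G t v : ℕ):ℤ) + 1) := by
  by_cases hne : ((t j).verts).Nonempty
  · set r := (t j).root with hr
    have hrmem : r ∈ (t j).verts := (t j).root_mem hne
    have hrB : IsBranch G r := ht.1 j r hrmem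
    have hrF : r ∈ (Finset.univ.filter (fun v => IsBranch G v)).filter
        (fun v => v ∈ (t j).verts) := by simp [hrB, hrmem]
    rw [if_pos hne, ← Finset.add_sum_erase _ _ hrF]
    have hroot : (sig G t r : ℤ) = (j : ℕ) + 1 := by rw [sig_root ht hne]; push_cast; ring
    have hbij : ∑ v ∈ ((Finset.univ.filter (fun v => IsBranch G v)).filter
          (fun v => v ∈ (t j).verts)).erase r, (2*(m:ℤ) - 2*((sig G t v : ℕ):ℤ) + 1)
        = ∑ e ∈ G.edgeFinset.filter (fun e => ∀ x ∈ e, x ∈ (t j).verts), sigSum G t m e := by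
      refine Finset.sum_bij (fun v _ => s(v, par G r v)) ?_ ?_ ?_ ?_
      · intro a ha
        rw [Finset.mem_erase, Finset.mem_filter] at ha
        obtain ⟨hane, _, hamem⟩ := ha
        obtain ⟨hadj, hpmem, _⟩ := par_in hT ht hamem hane
        rw [Finset.mem_filter, SimpleGraph.mem_edgeFinset, SimpleGraph.mem_edgeSet]
        refine ⟨hadj, ?_⟩
        intro x hx
        rw [Sym2.mem_iff] at hx
        rcases hx with rfl | rfl
        · exact hamem
        · exact hpmem
      · intro a ha b hb hab
        rw [Finset.mem_erase, Finset.mem_filter] at ha hb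
        obtain ⟨hane, _, hamem⟩ := ha
        obtain ⟨hbne, _, hbmem⟩ := hb
        rw [Sym2.eq_iff] at hab
        rcases hab with ⟨h1, _⟩ | ⟨h1, h2⟩
        · exact h1
        · exfalso
          obtain ⟨_, hda⟩ := par_spec hT (r := r) hane
          obtain ⟨_, hdb⟩ := par_spec hT (r := r) hbne
          rw [← h1] at hdb
          rw [h2] at hda
          omega
      · intro e he
        rw [Finset.mem_filter, SimpleGraph.mem_edgeFinset] at he
        obtain ⟨he1, he2⟩ := he
        induction e using Sym2.inductionOn with
        | hf u v =>
          rw [SimpleGraph.mem_edgeSet] at he1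
          have hu : u ∈ (t j).verts := he2 u (by simp)
          have hv : v ∈ (t j).verts := he2 v (by simp)
          have hposu : u ≠ r → 0 < G.dist r u := fun h =>
            hT.isConnected.pos_dist_of_ne (Ne.symm h)
          rcases tree_adj_dist hT (r := r) he1 with hd | hd
          · -- dist r v = dist r u + 1, so v ≠ r and u = par v
            have hvr : v ≠ r := by
              intro h; subst h
              rw [SimpleGraph.dist_self] at hd; omega
            have := par_unique hT hvr he1.symm hd.symm
            refine ⟨v, ?_, ?_⟩
            · rw [Finset.mem_erase, Finset.mem_filter]
              exact ⟨hvr, by simp [ht.1 j v hv], hv⟩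
            · show s(v, par G r v) = s(u, v)
              rw [← this, Sym2.eq_swap]
          · have hur : u ≠ r := by
              intro h; subst h
              rw [SimpleGraph.dist_self] at hd; omega
            have := par_unique hT hur he1 hd.symm
            refine ⟨u, ?_, ?_⟩
            · rw [Finset.mem_erase, Finset.mem_filter]
              exact ⟨hur, by simp [ht.1 j u hu], hu⟩
            · show s(u, par G r u) = s(u, v)
              rw [← this]
      · intro a ha
        rw [Finset.mem_erase, Finset.mem_filter] at ha
        obtain ⟨hane, _, hamem⟩ := ha
        obtain ⟨_, _, hsig⟩ := par_in hT ht hamem hane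
        show (2*(m:ℤ) - 2*((sig G t a : ℕ):ℤ) + 1) = sigSum G t m s(a, par G r a)
        rw [sigSum_mk]
        push_cast [← hsig]
        ring
    rw [hbij, hroot]
    ring
  · rw [if_neg hne]
    rw [Set.not_nonempty_iff_eq_empty] at hne
    have h1 : G.edgeFinset.filter (fun e => ∀ x ∈ e, x ∈ (t j).verts) = ∅ := by
      rw [Finset.filter_eq_empty_iff]
      intro e _
      induction e using Sym2.inductionOn with
      | hf u v =>
        intro h
        have := h u (by simp)
        rw [hne] at this
        exact this
    have h2 : (Finset.univ.filter (fun v => IsBranch G v)).filter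
        (fun v => v ∈ (t j).verts) = ∅ := by
      rw [Finset.filter_eq_empty_iff]
      intro v _ h
      rw [hne] at h
      exact h
    rw [h1, h2]
    simp

end Aux3
end Burn

namespace Burn
section Aux4
set_option linter.unusedSectionVars false
set_option maxHeartbeats 1000000
variable {V : Type} [DecidableEq V] [Fintype V] {G : SimpleGraph V} {l : ℕ}
  {t : Fin l → RSub G} {m : ℕ}

lemma defZ_per_edge (ht : IsAdmissible G t) (u v : V) :
    ∑ j : Fin l, (if (∀ x ∈ (s(u,v) : Sym2 V), x ∈ (t j).verts)
        then sigSum G t m s(u,v) else 0)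
      = defZ G t m s(u,v) := by
  rw [defZ_mk]
  by_cases hsp : SamePart t u v
  · obtain ⟨j0, hu0, hv0⟩ := hsp
    have hbu : IsBranch G u := ht.1 j0 u hu0
    have hbv : IsBranch G v := ht.1 j0 v hv0
    refine (Finset.sum_eq_single j0 ?_ ?_).trans ?_
    · intro j _ hj
      rw [if_neg]
      intro h
      exact hj ((ht.2 u hbu).unique (h u (by simp)) hu0)
    · intro h; simp at h
    · rw [if_pos, sigSum_mk, if_pos ⟨hbu, hbv, ⟨j0, hu0, hv0⟩⟩]
      intro x hx
      rw [Sym2.mem_iff] at hx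
      rcases hx with rfl | rfl
      exacts [hu0, hv0]
  · rw [if_neg (fun h => hsp h.2.2)]
    apply Finset.sum_eq_zero
    intro j _
    rw [if_neg]
    intro h
    exact hsp ⟨j, h u (by simp), h v (by simp)⟩

lemma defZ_split (ht : IsAdmissible G t) :
    ∑ e ∈ G.edgeFinset, defZ G t m e
      = ∑ j : Fin l, ∑ e ∈ G.edgeFinset.filter (fun e => ∀ x ∈ e, x ∈ (t j).verts),
          sigSum G t m e := by
  have h1 : (∑ j : Fin l, ∑ e ∈ G.edgeFinset.filter (fun e => ∀ x ∈ e, x ∈ (t j).verts),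
        sigSum G t m e)
      = ∑ e ∈ G.edgeFinset, ∑ j : Fin l,
          (if (∀ x ∈ e, x ∈ (t j).verts) then sigSum G t m e else 0) :=
    (Finset.sum_congr rfl fun j _ => Finset.sum_filter _ _).trans Finset.sum_comm
  rw [h1]
  apply Finset.sum_congr rfl
  intro e _
  induction e using Sym2.inductionOn with
  | hf u v => exact (defZ_per_edge ht u v).symm

lemma branch_split (ht : IsAdmissible G t) :
    ∑ v ∈ Finset.univ.filter (fun v => IsBranch G v), (2*(m:ℤ) - 2*((sig G t v:ℕ):ℤ) + 1)
      = ∑ j : Fin l, ∑ v ∈ (Finset.univ.filter (fun v => IsBranch G v)).filter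
          (fun v => v ∈ (t j).verts), (2*(m:ℤ) - 2*((sig G t v:ℕ):ℤ) + 1) := by
  have h1 : (∑ j : Fin l, ∑ v ∈ (Finset.univ.filter (fun v => IsBranch G v)).filter
        (fun v => v ∈ (t j).verts), (2*(m:ℤ) - 2*((sig G t v:ℕ):ℤ) + 1))
      = ∑ v ∈ Finset.univ.filter (fun v => IsBranch G v), ∑ j : Fin l,
          (if v ∈ (t j).verts then (2*(m:ℤ) - 2*((sig G t v:ℕ):ℤ) + 1) else 0) :=
    (Finset.sum_congr rfl fun j _ => Finset.sum_filter _ _).trans Finset.sum_comm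
  rw [h1]
  apply Finset.sum_congr rfl
  intro v hv
  rw [Finset.mem_filter] at hv
  obtain ⟨j0, hj0, _⟩ := ht.2 v hv.2
  have hs : (∑ j : Fin l, if v ∈ (t j).verts then (2*(m:ℤ) - 2*((sig G t v:ℕ):ℤ) + 1) else 0)
      = if v ∈ (t j0).verts then (2*(m:ℤ) - 2*((sig G t v:ℕ):ℤ) + 1) else 0 := by
    apply Finset.sum_eq_single j0
    · intro j _ hj
      rw [if_neg]
      intro h
      exact hj ((ht.2 v hv.2).unique h hj0)
    · intro h; simp at h
  rw [hs, if_pos hj0]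

lemma free_sum (ht : IsAdmissible G t) (hm : DegOK G t m) :
    ∑ i : Fin m, (if FreeIdx G t m i then 0 else (2*(m:ℤ) - 2*((i:ℕ):ℤ) - 1))
      = ∑ j : Fin l, (if ((t j).verts).Nonempty then 2*(m:ℤ) - 2*((j:ℕ):ℤ) - 1 else 0) := by
  rw [← Finset.sum_filter, show (∑ i : Fin m, (if FreeIdx G t m i then 0
      else (2*(m:ℤ) - 2*((i:ℕ):ℤ) - 1)))
    = ∑ i ∈ Finset.univ.filter (fun i : Fin m => ¬ FreeIdx G t m i),
        (2*(m:ℤ) - 2*((i:ℕ):ℤ) - 1) by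
      rw [Finset.sum_filter]
      apply Finset.sum_congr rfl
      intro i _
      by_cases h : FreeIdx G t m i <;> simp [h]]
  refine Finset.sum_bij (fun i hi => (⟨(i : ℕ), ?_⟩ : Fin l)) ?_ ?_ ?_ ?_
  · rw [Finset.mem_filter] at hi
    obtain ⟨h, _⟩ := not_forall.mp hi.2
    exact h
  · intro a ha
    rw [Finset.mem_filter] at ha ⊢
    refine ⟨Finset.mem_univ _, ?_⟩
    have := (not_forall.mp ha.2).choose_spec
    obtain ⟨h, hne⟩ := not_forall.mp ha.2
    rw [Set.nonempty_iff_ne_empty]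
    exact hne
  · intro a ha b hb hab
    have h2 := congrArg Fin.val hab
    simp only at h2
    exact Fin.ext h2
  · intro j hj
    rw [Finset.mem_filter] at hj
    have hlt : (j : ℕ) + 1 < m := part_lt ht hm hj.2
    refine ⟨⟨(j : ℕ), by omega⟩, ?_, ?_⟩
    · rw [Finset.mem_filter]
      refine ⟨Finset.mem_univ _, ?_⟩
      intro hfree
      have := hfree (by simpa using j.isLt)
      rw [Set.nonempty_iff_ne_empty] at hj
      exact hj.2 (by simpa [Fin.eta] using this)
    · exact Fin.ext rfl
  · intro a ha
    simp

lemma stage2_sum {g : Fin m → V × V}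
    (hg : ∀ i : Fin m, FreeIdx G t m i → Stage2OK G t (g i).1 (g i).2) :
    ∑ e ∈ G.edgeFinset, ∑ i : Fin m, (if FreeIdx G t m i ∧ s((g i).1, (g i).2) = e
        then (2*(m:ℤ) - 2*((i:ℕ):ℤ) - 1) else 0)
      = ∑ i : Fin m, (if FreeIdx G t m i then (2*(m:ℤ) - 2*((i:ℕ):ℤ) - 1) else 0) := by
  rw [Finset.sum_comm]
  apply Finset.sum_congr rfl
  intro i _
  by_cases hf : FreeIdx G t m i
  · rw [if_pos hf]
    have h1 : ∀ e ∈ G.edgeFinset,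
        (if FreeIdx G t m i ∧ s((g i).1, (g i).2) = e then (2*(m:ℤ) - 2*((i:ℕ):ℤ) - 1) else 0)
        = (if s((g i).1, (g i).2) = e then (2*(m:ℤ) - 2*((i:ℕ):ℤ) - 1) else 0) := by
      intro e _
      by_cases h : s((g i).1, (g i).2) = e <;> simp [h, hf]
    rw [Finset.sum_congr rfl h1, Finset.sum_ite_eq]
    rw [if_pos]
    rw [SimpleGraph.mem_edgeFinset, SimpleGraph.mem_edgeSet]
    exact (hg i hf).1
  · rw [if_neg hf]
    apply Finset.sum_eq_zero
    intro e _
    rw [if_neg (fun h => hf h.1)]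

/-- The key counting identity. -/
lemma key (hT : G.IsTree) (ht : IsAdmissible G t) (hm : DegOK G t m)
    (c : Sym2 V → ℕ) (g : Fin m → V × V)
    (hg : ∀ i : Fin m, FreeIdx G t m i → Stage2OK G t (g i).1 (g i).2)
    (hc : ∀ u v : V, G.Adj u v →
      c s(u, v) = stage1 G t m u v +
        ∑ i : Fin m,
          (if FreeIdx G t m i ∧ s((g i).1, (g i).2) = s(u, v) then
            2 * (m - 1 - (i : ℕ)) + 1 else 0)) :
    (∑ e ∈ G.edgeFinset, (c e : ℤ))
      = ∑ e ∈ G.edgeFinset, baseZ G m (sig G t) e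
        + ∑ i : Fin m, (2*(m:ℤ) - 2*((i:ℕ):ℤ) - 1)
        - ∑ v ∈ Finset.univ.filter (fun v => IsBranch G v),
            (2*(m:ℤ) - 2*((sig G t v : ℕ):ℤ) + 1) := by
  have step1 : ∀ e ∈ G.edgeFinset, (c e : ℤ)
      = baseZ G m (sig G t) e - defZ G t m e
        + ∑ i : Fin m, (if FreeIdx G t m i ∧ s((g i).1, (g i).2) = e
            then (2*(m:ℤ) - 2*((i:ℕ):ℤ) - 1) else 0) := by
    intro e he
    induction e using Sym2.inductionOn with
    | hf u v =>
      rw [SimpleGraph.mem_edgeFinset, SimpleGraph.mem_edgeSet] at he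
      rw [hc u v he]
      rw [Nat.cast_add, stage1_cast ht hm, Nat.cast_sum]
      congr 1
      apply Finset.sum_congr rfl
      intro i _
      have hi : (i : ℕ) < m := i.isLt
      by_cases h : FreeIdx G t m i ∧ s((g i).1, (g i).2) = s(u, v)
      · rw [if_pos h, if_pos h]
        omega
      · rw [if_neg h, if_neg h, Nat.cast_zero]
  rw [Finset.sum_congr rfl step1]
  rw [Finset.sum_add_distrib, Finset.sum_sub_distrib]
  rw [stage2_sum hg]
  have e4 : ∑ i : Fin m, (if FreeIdx G t m i then (2*(m:ℤ) - 2*((i:ℕ):ℤ) - 1) else 0)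
      = ∑ i : Fin m, (2*(m:ℤ) - 2*((i:ℕ):ℤ) - 1)
        - ∑ i : Fin m, (if FreeIdx G t m i then 0 else (2*(m:ℤ) - 2*((i:ℕ):ℤ) - 1)) := by
    rw [← Finset.sum_sub_distrib]
    apply Finset.sum_congr rfl
    intro i _
    by_cases h : FreeIdx G t m i <;> simp [h]
  rw [e4, free_sum ht hm, defZ_split ht, branch_split ht]
  have e5 : ∑ j : Fin l, ∑ v ∈ (Finset.univ.filter (fun v => IsBranch G v)).filter
        (fun v => v ∈ (t j).verts), (2*(m:ℤ) - 2*((sig G t v:ℕ):ℤ) + 1)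
      = ∑ j : Fin l, (∑ e ∈ G.edgeFinset.filter (fun e => ∀ x ∈ e, x ∈ (t j).verts),
            sigSum G t m e
          + (if ((t j).verts).Nonempty then 2*(m:ℤ) - 2*((j:ℕ):ℤ) - 1 else 0)) := by
    apply Finset.sum_congr rfl
    intro j _
    exact (part_sum hT ht j).symm
  rw [e5, Finset.sum_add_distrib]
  ring

end Aux4
end Burn

namespace Burn
section Aux5
set_option linter.unusedSectionVars false
set_option maxHeartbeats 1000000
variable {V : Type} [DecidableEq V] [Fintype V] {G : SimpleGraph V} {l : ℕ}
  {t : Fin l → RSub G} {m : ℕ}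

lemma card_subdiv (G : SimpleGraph V) (c : Sym2 V → ℕ) :
    Nat.card (SubdivV G c) = Nat.card V + ∑ e ∈ G.edgeFinset, c e := by
  have h0 : Nat.card (SubdivV G c)
      = Nat.card (V ⊕ (Σ e : G.edgeSet, Fin (c (e : Sym2 V)))) := rfl
  rw [h0, Nat.card_sum]
  congr 1
  rw [Nat.card_eq_fintype_card, Fintype.card_sigma]
  simp only [Fintype.card_fin]
  have h1 : (∑ e : G.edgeSet, c (e : Sym2 V)) = ∑ e ∈ G.edgeSet.toFinset, c e :=
    Finset.sum_set_coe _
  rw [h1]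
  apply Finset.sum_congr _ (fun _ _ => rfl)
  ext e
  simp

lemma baseZ_congr {σ1 σ2 : V → ℕ} (h : ∀ v, IsBranch G v → σ1 v = σ2 v) (e : Sym2 V) :
    baseZ G m σ1 e = baseZ G m σ2 e := by
  induction e using Sym2.inductionOn with
  | hf u v =>
    rw [baseZ_mk, baseZ_mk]
    by_cases h1 : IsBranch G u <;> by_cases h2 : IsBranch G v <;>
        simp only [h1, h2, and_true, and_false, true_and, false_and, if_true, if_false]
    · rw [h u h1, h v h2]
    · rw [h u h1]
    · rw [h v h2]

end Aux5
end Burn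

open Burn

/-- If `s` and `s'` are `T`-admissible sequences with the same signature,
then for every degree `m` admissible for both, any tree induced by `s` of degree `m` has the
same order as any tree induced by `s'` of degree `m`. -/
theorem statement9 (T : BG) (hTree : T.G.IsTree)
    (hIrr : ∀ v : T.V, deg T.G v ≠ 2)
    {l₁ l₂ : ℕ} (s : Fin l₁ → RSub T.G) (s' : Fin l₂ → RSub T.G)
    (hs : IsAdmissible T.G s) (hs' : IsAdmissible T.G s')
    (hsig : ∀ v : T.V, IsBranch T.G v → sig T.G s v = sig T.G s' v)
    (m : ℕ) (hm : DegOK T.G s m) (hm' : DegOK T.G s' m)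
    (A B : BG) (hA : IsInduced T s m A) (hB : IsInduced T s' m B) :
    Nat.card A.V = Nat.card B.V := by
  letI : DecidableEq T.V := Classical.decEq _
  obtain ⟨ιA, cA, gA, hgA, hcA, φA, -⟩ := hA
  obtain ⟨ιB, cB, gB, hgB, hcB, φB, -⟩ := hB
  have eA : Nat.card A.V = Nat.card T.V + ∑ e ∈ T.G.edgeFinset, cA e := by
    rw [← card_subdiv T.G cA]
    exact (Nat.card_congr φA.toEquiv).symm
  have eB : Nat.card B.V = Nat.card T.V + ∑ e ∈ T.G.edgeFinset, cB e := by
    rw [← card_subdiv T.G cB]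
    exact (Nat.card_congr φB.toEquiv).symm
  have keyA := key hTree hs hm cA gA hgA hcA
  have keyB := key hTree hs' hm' cB gB hgB hcB
  have hbase : ∑ e ∈ T.G.edgeFinset, baseZ T.G m (sig T.G s) e
      = ∑ e ∈ T.G.edgeFinset, baseZ T.G m (sig T.G s') e :=
    Finset.sum_congr rfl fun e _ => baseZ_congr hsig e
  have hbr : ∑ v ∈ Finset.univ.filter (fun v => IsBranch T.G v),
        (2*(m:ℤ) - 2*((sig T.G s v : ℕ):ℤ) + 1)
      = ∑ v ∈ Finset.univ.filter (fun v => IsBranch T.G v),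
        (2*(m:ℤ) - 2*((sig T.G s' v : ℕ):ℤ) + 1) := by
    apply Finset.sum_congr rfl
    intro v hv
    rw [Finset.mem_filter] at hv
    rw [hsig v hv.2]
  have hsum : (∑ e ∈ T.G.edgeFinset, (cA e : ℤ)) = ∑ e ∈ T.G.edgeFinset, (cB e : ℤ) := by
    rw [keyA, keyB, hbase, hbr]
  have hsumN : (∑ e ∈ T.G.edgeFinset, cA e) = ∑ e ∈ T.G.edgeFinset, cB e := by
    have := hsum
    push_cast at this
    exact_mod_cast this
  rw [eA, eB, hsumN]
end
end
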